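/- arXiv:2002.11647 — 13 statements merged into one kernel-verified Lean document; each statement's English description precedes it below -/
import Mathlib

section
/- Let A be a commutative ring. Then for every ideal I ⊆ A one has dim_v(A/I) ≤ dim_v(A), and for every multiplicative subset S ⊆ A one has dim_v(S⁻¹A) ≤ dim_v(A). -/
/-!
If `f : A →+* B` makes every element of `B` a fraction `f a / f s` with `f s` a unit (as for
`A → A/I` and `A → S⁻¹A`), then each prime `𝔭` of `B` contracts to a prime `𝔮` of `A` with
`A/𝔮 ⊆ B/𝔭 ⊆ Frac(A/𝔮)`. So `Frac(B/𝔭) ≅ Frac(A/𝔮)` over `A/𝔮`, and every valuation ring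
between `B/𝔭` and its fraction field is, up to this isomorphism, one between `A/𝔮` and
`Frac(A/𝔮)`; hence `dim_v(B/𝔭) ≤ dim_v(A/𝔮)`.
-/

/-- The valuative dimension of a commutative ring `A`, following Jaffard:
`dim_v A = sup` over primes `𝔭` of the supremum of the Krull dimensions (ranks) of
valuation rings `R` with `A/𝔭 ⊆ R ⊆ Frac(A/𝔭)`. -/
noncomputable def valuativeDim (A : Type*) [CommRing A] : WithBot ℕ∞ :=
  ⨆ (p : PrimeSpectrum A),
    ⨆ (R : ValuationSubring (FractionRing (A ⧸ p.asIdeal))),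
      ⨆ (_ : Set.range (algebraMap (A ⧸ p.asIdeal) (FractionRing (A ⧸ p.asIdeal))) ⊆
          (R : Set (FractionRing (A ⧸ p.asIdeal)))),
        ringKrullDim R

section Field

variable {K L : Type*} [Field K] [Field L]

-- `valuativeDim A` is definitionally `⨆ 𝔭, valuativeDimOver (Set.range (A/𝔭 → Frac(A/𝔭)))`.
noncomputable def valuativeDimOver (S : Set K) : WithBot ℕ∞ :=
  ⨆ (R : ValuationSubring K), ⨆ (_ : S ⊆ (R : Set K)), ringKrullDim R

theorem ValuationSubring.ringKrullDim_comap_ringEquiv (R : ValuationSubring L) (e : K ≃+* L) :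
    ringKrullDim (R.comap e.toRingHom) = ringKrullDim R :=
  ringKrullDim_eq_of_ringEquiv <| RingEquiv.ofBijective
    (e.toRingHom.restrict (R.comap e.toRingHom) R fun _ hx => hx)
    ⟨fun _ _ h => Subtype.ext (e.injective (congrArg Subtype.val h)),
      fun y => ⟨⟨e.symm y, by simp [ValuationSubring.mem_comap]⟩,
        Subtype.ext (e.apply_symm_apply y)⟩⟩

theorem valuativeDimOver_antitone : Antitone (valuativeDimOver (K := K)) :=
  fun _ _ hST => iSup_mono fun _ => iSup_mono' fun hT => ⟨hST.trans hT, le_rfl⟩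

theorem valuativeDimOver_le_image (e : K ≃+* L) (S : Set K) :
    valuativeDimOver S ≤ valuativeDimOver (e '' S) := by
  refine iSup₂_le fun R hS => ?_
  refine le_iSup₂_of_le (R.comap e.symm.toRingHom) ?_ (R.ringKrullDim_comap_ringEquiv e.symm).ge
  rintro _ ⟨x, hx, rfl⟩
  simpa [ValuationSubring.mem_comap] using hS hx

theorem valuativeDimOver_range_algebraMap_le (D : Type*) [CommRing D] [IsDomain D]
    [Algebra D K] [IsFractionRing D K] [Algebra D L] [IsFractionRing D L] :
    valuativeDimOver (Set.range (algebraMap D K)) ≤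
      valuativeDimOver (Set.range (algebraMap D L)) := by
  let e := IsLocalization.algEquiv (nonZeroDivisors D) K L
  have : e.toRingEquiv '' Set.range (algebraMap D K) = Set.range (algebraMap D L) := by
    rw [← Set.range_comp]; congr 1; funext x; exact e.commutes x
  exact this ▸ valuativeDimOver_le_image e.toRingEquiv _

end Field

theorem valuativeDimOver_range_algebraMap_le_of_injective {D₁ D₂ : Type*}
    [CommRing D₁] [IsDomain D₁] [CommRing D₂] [IsDomain D₂]
    (g : D₁ →+* D₂) (hg : Function.Injective g)
    (hfrac : ∀ d : D₂, ∃ a b : D₁, g b ≠ 0 ∧ d * g b = g a) :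
    valuativeDimOver (Set.range (algebraMap D₂ (FractionRing D₂))) ≤
      valuativeDimOver (Set.range (algebraMap D₁ (FractionRing D₁))) := by
  let ι := algebraMap D₂ (FractionRing D₂)
  let : Algebra D₁ (FractionRing D₂) := (ι.comp g).toAlgebra
  have hι : Function.Injective ι := IsFractionRing.injective D₂ _
  have hdiv : ∀ d : D₂, ∃ a b : D₁, ι d = ι (g a) / ι (g b) := fun d => by
    obtain ⟨a, b, hb, h⟩ := hfrac d
    exact ⟨a, b, by rw [eq_div_iff ((map_ne_zero_iff ι hι).mpr hb), ← map_mul, h]⟩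
  have : FaithfulSMul D₁ (FractionRing D₂) :=
    (faithfulSMul_iff_algebraMap_injective _ _).mpr (hι.comp hg)
  have : IsFractionRing D₁ (FractionRing D₂) := IsFractionRing.of_field _ _ fun z => by
    obtain ⟨x, y, -, rfl⟩ := IsFractionRing.div_surjective D₂ z
    obtain ⟨a, b, hx⟩ := hdiv x
    obtain ⟨a', b', hy'⟩ := hdiv y
    refine ⟨a * b', b * a', ?_⟩
    simp only [RingHom.algebraMap_toAlgebra, RingHom.comp_apply, map_mul]
    rw [hx, hy', div_div_div_eq]
  calc valuativeDimOver (Set.range ι)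
      ≤ valuativeDimOver (Set.range (algebraMap D₁ (FractionRing D₂))) :=
        valuativeDimOver_antitone (Set.range_comp_subset_range g ι)
    _ ≤ _ := valuativeDimOver_range_algebraMap_le D₁

theorem valuativeDim_le_of_forall_exists_mul_eq {A B : Type*} [CommRing A] [CommRing B]
    (f : A →+* B) (hf : ∀ b : B, ∃ a s : A, IsUnit (f s) ∧ b * f s = f a) :
    valuativeDim B ≤ valuativeDim A := by
  refine iSup_le fun p => le_iSup_of_le (p.comap f) ?_
  refine valuativeDimOver_range_algebraMap_le_of_injective (Ideal.quotientMap p.asIdeal f le_rfl)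
    Ideal.quotientMap_injective fun d => ?_
  obtain ⟨b, rfl⟩ := Ideal.Quotient.mk_surjective d
  obtain ⟨a, s, hs, h⟩ := hf b
  exact ⟨Ideal.Quotient.mk _ a, Ideal.Quotient.mk _ s,
    (hs.map (Ideal.Quotient.mk p.asIdeal)).ne_zero,
    (map_mul (Ideal.Quotient.mk p.asIdeal) b (f s)).symm.trans (congrArg _ h)⟩

/-- For every ideal `I ⊆ A` one has `dim_v (A/I) ≤ dim_v A`, and for every
multiplicative subset `S ⊆ A` one has `dim_v (S⁻¹A) ≤ dim_v A`. -/
theorem valuativeDim_quotient_le_and_valuativeDim_localization_le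
    {A : Type*} [CommRing A] :
    (∀ I : Ideal A, valuativeDim (A ⧸ I) ≤ valuativeDim A) ∧
    (∀ S : Submonoid A, valuativeDim (Localization S) ≤ valuativeDim A) := by
  refine ⟨fun I => valuativeDim_le_of_forall_exists_mul_eq (Ideal.Quotient.mk I) fun b => ?_,
    fun S => valuativeDim_le_of_forall_exists_mul_eq (algebraMap A (Localization S)) fun b => ?_⟩
  · obtain ⟨a, rfl⟩ := Ideal.Quotient.mk_surjective b
    exact ⟨a, 1, by simp⟩
  · obtain ⟨⟨a, s⟩, h⟩ := IsLocalization.surj S b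
    exact ⟨a, s, IsLocalization.map_units _ s, h⟩
end

section
/- Let A be a commutative ring and I ⊆ A an ideal such that every prime ideal of A containing I strictly contains some other prime ideal of A (equivalently, the closed set V(I) ⊆ Spec A contains no minimal prime of A). Then dim_v(A/I) + 1 ≤ dim_v(A). -/
/-!
Fix a prime `𝔭 ⊇ I`, a prime `𝔮 ⊊ 𝔭` and a valuation ring `R` of `Frac(A/𝔭)` containing `A/𝔭`.
A valuation ring `V` of `Frac(A/𝔮)` dominating `(A/𝔮)_𝔭` has `A/𝔭` inside its residue field
`κ(V)`. Extending `R` along `Frac(A/𝔭) ↪ κ(V)` gives a valuation ring `S` of `κ(V)` with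
`dim R ≤ dim S`, since `S` is flat over `R` and so has going down. The composite
`W = {x ∈ V | x̄ ∈ S}` contains `A/𝔮` and maps onto `S`, killing the maximal ideal of `V`, which is
nonzero because it contains the image of `𝔭/𝔮`; hence `dim R + 1 ≤ dim S + 1 ≤ dim W`.
-/

open IsLocalRing

theorem ENat.WithBot.iSup_add_one_le {ι : Sort*} {f : ι → WithBot ℕ∞} {y : WithBot ℕ∞}
    (h : ∀ i, f i + 1 ≤ y) : (⨆ i, f i) + 1 ≤ y := by
  induction y using WithBot.recBotCoe with
  | bot =>
    have hf (i : ι) : f i = ⊥ := by simpa using h i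
    simp [hf]
  | coe e =>
    induction e using ENat.recTopCoe with
    | top => exact le_top
    | coe n =>
      simp only [ENat.WithBot.coe_eq_natCast, ENat.WithBot.add_one_le_natCast_iff] at h ⊢
      cases n with
      | zero =>
        have hf (i : ι) : f i = ⊥ := (WithBot.lt_zero_iff_eq_bot _).mp (h i)
        simp [hf]
      | succ k =>
        simp only [Nat.cast_add, Nat.cast_one, ENat.WithBot.lt_add_one_iff] at h ⊢
        exact iSup_le h

theorem ringKrullDim_le_of_hasGoingDown {R S : Type*} [CommRing R] [CommRing S] [Algebra R S]
    [IsLocalRing R] [IsLocalRing S] [IsLocalHom (algebraMap R S)] [Algebra.HasGoingDown R S] :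
    ringKrullDim R ≤ ringKrullDim S := by
  refine iSup_le fun l => ?_
  obtain ⟨P, -, _, _⟩ := Ideal.exists_ideal_le_liesOver_of_le (maximalIdeal S)
    (le_maximalIdeal l.last.2.ne_top)
  obtain ⟨L, hL, -, -⟩ := Ideal.exists_ltSeries_of_hasGoingDown l P
  exact hL ▸ Order.LTSeries.length_le_krullDim L

theorem Module.Flat.of_valuationRing_of_injective {R S : Type*} [CommRing R] [IsDomain R]
    [ValuationRing R] [CommRing S] [IsDomain S] [Algebra R S]
    (h : Function.Injective (algebraMap R S)) : Module.Flat R S :=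
  (Module.Flat.flat_iff_torsion_eq_bot_of_isBezout).mpr <|
    Submodule.isTorsionFree_iff_torsion_eq_bot.mp
      (Module.isTorsionFree_iff_algebraMap_injective.mpr h)

namespace ValuationSubring

theorem exists_le_comap_ringKrullDim_le {F L : Type*} [Field F] [Field L] (ι : F →+* L)
    (R : ValuationSubring F) :
    ∃ S : ValuationSubring L, R ≤ S.comap ι ∧ ringKrullDim R ≤ ringKrullDim S := by
  obtain ⟨S, hS, _⟩ := exists_factor_valuationRing (ι.comp R.subtype)
  let _ := ((ι.comp R.subtype).codRestrict S.toSubring hS).toAlgebra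
  have : Module.Flat R S := .of_valuationRing_of_injective fun x y hxy =>
    Subtype.ext (ι.injective (congrArg Subtype.val hxy))
  exact ⟨S, fun x hx => hS ⟨x, hx⟩, ringKrullDim_le_of_hasGoingDown⟩

theorem exists_ker_residue_eq {B K : Type*} [CommRing B] [IsDomain B] [Field K]
    [Algebra B K] [IsFractionRing B K] (P : Ideal B) [P.IsPrime] :
    ∃ (V : ValuationSubring K) (hV : ∀ b, algebraMap B K b ∈ V),
      RingHom.ker ((residue V).comp ((algebraMap B K).codRestrict V.toSubring hV)) = P := by
  have hunits (y : P.primeCompl) : IsUnit (algebraMap B K y) :=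
    IsLocalization.map_units K (⟨y, P.primeCompl_le_nonZeroDivisors y.2⟩ : nonZeroDivisors B)
  let f : Localization.AtPrime P →+* K := IsLocalization.lift (S := Localization.AtPrime P) hunits
  obtain ⟨V, hV, _⟩ := exists_factor_valuationRing f
  have hB (b : B) : algebraMap B K b ∈ V :=
    IsLocalization.lift_eq (S := Localization.AtPrime P) hunits b ▸ hV _
  have hfactor : (algebraMap B K).codRestrict V.toSubring hB =
      (f.codRestrict V.toSubring hV).comp (algebraMap B (Localization.AtPrime P)) :=
    RingHom.ext fun b => Subtype.ext (IsLocalization.lift_eq hunits b).symm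
  refine ⟨V, hB, ?_⟩
  rw [hfactor, ← RingHom.comap_ker, ← Ideal.comap_comap, ker_residue, maximalIdeal_comap]
  exact Localization.AtPrime.under_maximalIdeal

variable {K : Type*} [Field K] (V : ValuationSubring K)

theorem residue_eq_zero_of_inv_notMem {x : K} (hx : x ∈ V) (hinv : x⁻¹ ∉ V) :
    residue V ⟨x, hx⟩ = 0 :=
  (residue_eq_zero_iff _).mpr (V.coe_mem_nonunits_iff.mp (V.mem_nonunits_iff_or.mpr (.inr hinv)))

theorem residue_inv {x : K} (hx : x ∈ V) (hinv : x⁻¹ ∈ V) :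
    residue V ⟨x⁻¹, hinv⟩ = (residue V ⟨x, hx⟩)⁻¹ := by
  rcases eq_or_ne x 0 with rfl | hx0
  · have h0 : (⟨0, hx⟩ : V) = 0 := rfl
    simp only [inv_zero, h0, map_zero]
  · refine eq_inv_of_mul_eq_one_left ?_
    rw [← map_mul, ← map_one (residue V)]
    exact congrArg _ (Subtype.ext (inv_mul_cancel₀ hx0))

def composite (S : ValuationSubring (ResidueField V)) : ValuationSubring K where
  toSubring := (S.toSubring.comap (residue V)).map V.subtype
  mem_or_inv_mem' x := by
    have mem {y : K} (hy : y ∈ V) (hyS : residue V ⟨y, hy⟩ ∈ S) :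
        y ∈ (S.toSubring.comap (residue V)).map V.subtype :=
      Subring.mem_map.mpr ⟨⟨y, hy⟩, hyS, rfl⟩
    by_cases hx : x ∈ V
    · by_cases hxS : residue V ⟨x, hx⟩ ∈ S
      · exact .inl (mem hx hxS)
      · have hinv : x⁻¹ ∈ V := by
          by_contra hinv
          exact hxS (V.residue_eq_zero_of_inv_notMem hx hinv ▸ S.zero_mem)
        refine .inr (mem hinv ?_)
        rw [V.residue_inv hx hinv]
        exact (S.mem_or_inv_mem _).resolve_left hxS
    · have hinv := (V.mem_or_inv_mem x).resolve_left hx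
      refine .inr (mem hinv ?_)
      rw [V.residue_eq_zero_of_inv_notMem hinv (by rwa [inv_inv])]
      exact S.zero_mem

variable {V}

theorem mem_composite {S : ValuationSubring (ResidueField V)} {x : K} :
    x ∈ V.composite S ↔ ∃ h : x ∈ V, residue V ⟨x, h⟩ ∈ S := by
  rw [← mem_toSubring]
  constructor
  · rintro ⟨y, hy, rfl⟩
    exact ⟨y.2, hy⟩
  · rintro ⟨hx, hxS⟩
    exact ⟨⟨x, hx⟩, hxS, rfl⟩

theorem composite_le (S : ValuationSubring (ResidueField V)) : V.composite S ≤ V :=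
  fun _ hx => (mem_composite.mp hx).1

variable (S : ValuationSubring (ResidueField V))

noncomputable def compositeResidue : V.composite S →+* S :=
  ((residue V).comp ((V.composite S).inclusion V (composite_le S))).codRestrict S.toSubring
    fun x => (mem_composite.mp x.2).2

theorem compositeResidue_surjective : Function.Surjective (compositeResidue S) := by
  rintro ⟨s, hs⟩
  obtain ⟨v, rfl⟩ := residue_surjective s
  exact ⟨⟨v, mem_composite.mpr ⟨v.2, hs⟩⟩, rfl⟩

theorem ringKrullDim_add_one_le_composite (hV : maximalIdeal V ≠ ⊥) :
    ringKrullDim S + 1 ≤ ringKrullDim (V.composite S) := by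
  obtain ⟨t, ht, ht0⟩ := Submodule.exists_mem_ne_zero_of_ne_bot hV
  have htS : residue V t = 0 := (residue_eq_zero_iff t).mpr ht
  let t' : V.composite S := ⟨t, mem_composite.mpr ⟨t.2, htS ▸ S.zero_mem⟩⟩
  have ht'0 : t' ≠ 0 := fun h => ht0 (Subtype.ext (congrArg Subtype.val h : (t : K) = 0))
  have hker : Ideal.span {t'} ≤ RingHom.ker (compositeResidue S) :=
    (Ideal.span_singleton_le_iff_mem _).mpr (Subtype.ext htS)
  calc ringKrullDim S + 1 ≤ ringKrullDim (V.composite S ⧸ Ideal.span {t'}) + 1 := by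
        gcongr
        exact ringKrullDim_le_of_surjective _
          (Ideal.Quotient.lift_surjective_of_surjective _ hker (compositeResidue_surjective S))
    _ ≤ ringKrullDim (V.composite S) :=
        ringKrullDim_quotient_succ_le_of_nonZeroDivisor (mem_nonZeroDivisors_of_ne_zero ht'0)

end ValuationSubring

theorem exists_valuationSubring_ringKrullDim_add_one_le {B D K F : Type*}
    [CommRing B] [IsDomain B] [CommRing D] [IsDomain D] [Field K] [Algebra B K]
    [IsFractionRing B K] [Field F] [Algebra D F] [IsFractionRing D F]
    (π : B →+* D) (hπ : Function.Surjective π) (hker : RingHom.ker π ≠ ⊥)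
    (R : ValuationSubring F) (hR : Set.range (algebraMap D F) ⊆ R) :
    ∃ W : ValuationSubring K, Set.range (algebraMap B K) ⊆ W ∧
      ringKrullDim R + 1 ≤ ringKrullDim W := by
  have := RingHom.ker_isPrime π
  obtain ⟨V, hV, hVker⟩ := ValuationSubring.exists_ker_residue_eq (K := K) (RingHom.ker π)
  let ψ := (residue V).comp ((algebraMap B K).codRestrict V.toSubring hV)
  let φ : D →+* ResidueField V := π.liftOfSurjective hπ ⟨ψ, hVker.ge⟩
  have hφ (b : B) : φ (π b) = ψ b := π.liftOfSurjective_comp_apply hπ _ b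
  have hφinj : Function.Injective φ := by
    refine (injective_iff_map_eq_zero φ).mpr fun d hd => ?_
    obtain ⟨b, rfl⟩ := hπ d
    rwa [hφ, ← RingHom.mem_ker, hVker, RingHom.mem_ker] at hd
  let ι : F →+* ResidueField V := IsFractionRing.lift hφinj
  obtain ⟨S, hRS, hdim⟩ := R.exists_le_comap_ringKrullDim_le ι
  have hBW : Set.range (algebraMap B K) ⊆ V.composite S := by
    rintro _ ⟨b, rfl⟩
    refine ValuationSubring.mem_composite.mpr ⟨hV b, ?_⟩
    have : residue V ⟨_, hV b⟩ = ι (algebraMap D F (π b)) := by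
      rw [IsFractionRing.lift_algebraMap, hφ]
      rfl
    exact this ▸ hRS (hR ⟨π b, rfl⟩)
  have hVm : maximalIdeal V ≠ ⊥ := by
    obtain ⟨b, hb, hb0⟩ := Submodule.exists_mem_ne_zero_of_ne_bot hker
    refine Submodule.ne_bot_iff _ |>.mpr ⟨⟨_, hV b⟩, ?_, ?_⟩
    · rw [← ker_residue, RingHom.mem_ker]
      exact (hVker ▸ hb : b ∈ RingHom.ker ψ)
    · exact fun h => hb0 (IsFractionRing.injective B K (by simpa using congrArg Subtype.val h))
  exact ⟨V.composite S, hBW,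
    (add_le_add_left hdim 1).trans (ValuationSubring.ringKrullDim_add_one_le_composite S hVm)⟩

theorem ringKrullDim_le_valuativeDim {A : Type*} [CommRing A] (p : PrimeSpectrum A)
    (W : ValuationSubring (FractionRing (A ⧸ p.asIdeal)))
    (hW : Set.range (algebraMap (A ⧸ p.asIdeal) (FractionRing (A ⧸ p.asIdeal))) ⊆ W) :
    ringKrullDim W ≤ valuativeDim A :=
  le_iSup_of_le p <| le_iSup_of_le W <| le_iSup_of_le hW le_rfl

/-- If every prime ideal of `A` containing `I` strictly contains some other prime ideal
of `A` (i.e. `V(I)` contains no minimal prime), then `dim_v (A/I) + 1 ≤ dim_v A`. -/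
theorem valuativeDim_quotient_add_one_le {A : Type*} [CommRing A] (I : Ideal A)
    (h : ∀ p : Ideal A, p.IsPrime → I ≤ p → ∃ q : Ideal A, q.IsPrime ∧ q < p) :
    valuativeDim (A ⧸ I) + 1 ≤ valuativeDim A := by
  refine ENat.WithBot.iSup_add_one_le fun p => ENat.WithBot.iSup_add_one_le fun R =>
    ENat.WithBot.iSup_add_one_le fun hR => ?_
  let f : A →+* (A ⧸ I) ⧸ p.asIdeal := (Ideal.Quotient.mk _).comp (Ideal.Quotient.mk I)
  have hf : Function.Surjective f := Ideal.Quotient.mk_surjective.comp Ideal.Quotient.mk_surjective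
  have hIf : I ≤ RingHom.ker f := fun a ha => by simp [f, Ideal.Quotient.eq_zero_iff_mem.mpr ha]
  obtain ⟨q, hq, hqf⟩ := h _ (RingHom.ker_isPrime f) hIf
  let π : A ⧸ q →+* (A ⧸ I) ⧸ p.asIdeal := Ideal.Quotient.lift q f fun a ha => hqf.le ha
  have hker : RingHom.ker π ≠ ⊥ := by
    rw [Ideal.ker_quotient_lift, Ne, Ideal.map_eq_bot_iff_le_ker, Ideal.mk_ker]
    exact hqf.not_ge
  obtain ⟨W, hW, hdim⟩ := exists_valuationSubring_ringKrullDim_add_one_le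
    (K := FractionRing (A ⧸ q)) π
    (Ideal.Quotient.lift_surjective_of_surjective q _ hf) hker R hR
  exact hdim.trans (ringKrullDim_le_valuativeDim ⟨q, hq⟩ W hW)
end

section
/- Let A → B be an injective integral ring homomorphism of commutative rings (so that Spec B → Spec A is a dominant integral morphism). Then dim_v(B) = dim_v(A). -/
lemma ringKrullDim_le_of_comap_surjective {A B : Type*} [CommRing A] [CommRing B] [IsDomain B]
    [ValuationRing B] (f : A →+* B) (hf : Function.Surjective (PrimeSpectrum.comap f)) :
    ringKrullDim A ≤ ringKrullDim B := by
  refine Order.krullDim_le_of_strictComono_and_surj (PrimeSpectrum.comap f) (fun P Q h => ?_) hf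
  rcases total_of (· ≤ ·) P.asIdeal Q.asIdeal with hPQ | hQP
  · exact lt_of_le_of_ne hPQ (by rintro rfl; exact h.ne rfl)
  · exact absurd (Ideal.comap_mono hQP) h.not_ge

lemma ringKrullDim_le_of_exists_pow_associated {A B : Type*} [CommRing A] [CommRing B]
    [Algebra A B] (h : ∀ x : B, ∃ n ≠ 0, ∃ a : A, Associated (x ^ n) (algebraMap A B a)) :
    ringKrullDim B ≤ ringKrullDim A := by
  have hle : ∀ P Q : PrimeSpectrum B, P.comap (algebraMap A B) = Q.comap (algebraMap A B) →
      P ≤ Q := by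
    intro P Q hPQ x hx
    obtain ⟨n, hn, a, hxa⟩ := h x
    have haP : a ∈ (P.comap (algebraMap A B)).asIdeal :=
      (Ideal.mem_iff_of_associated hxa).mp (P.asIdeal.pow_mem_of_mem hx n (Nat.pos_of_ne_zero hn))
    rw [hPQ] at haP
    exact Q.isPrime.mem_of_pow_mem n ((Ideal.mem_iff_of_associated hxa).mpr haP)
  refine Order.krullDim_le_of_strictMono _ (Monotone.strictMono_of_injective
    (fun P Q h => Ideal.comap_mono h) fun P Q hPQ => le_antisymm (hle P Q hPQ) (hle Q P hPQ.symm))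

instance ValuationRing.flat {V R : Type*} [CommRing V] [IsDomain V] [ValuationRing V]
    [CommRing R] [IsDomain R] [Algebra V R] [FaithfulSMul V R] : Module.Flat V R := by
  rw [Module.Flat.flat_iff_torsion_eq_bot_of_isBezout, ← Submodule.isTorsionFree_iff_torsion_eq_bot]
  infer_instance

section Fields

variable {K L : Type*} [Field K] [Field L]

open Polynomial in
lemma Valuation.exists_pow_eq_algebraMap_of_isAlgebraic {Γ₀ : Type*}
    [LinearOrderedCommGroupWithZero Γ₀] [Algebra K L] (v : Valuation L Γ₀) {x : L}
    (hx : IsAlgebraic K x) (hx0 : x ≠ 0) :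
    ∃ n ≠ 0, ∃ a : K, v (x ^ n) = v (algebraMap K L a) := by
  obtain ⟨P, hP0, hPx⟩ := hx
  set t : ℕ → L := fun i => algebraMap K L (P.coeff i) * x ^ i
  have hsum : ∑ i ∈ P.support, t i = 0 := by
    rwa [aeval_def, eval₂_eq_sum, Polynomial.sum_def] at hPx
  have hvc : ∀ i ∈ P.support, v (algebraMap K L (P.coeff i)) ≠ 0 := fun i hi => by
    simpa using mem_support_iff.mp hi
  have hvx : v x ≠ 0 := by simpa using hx0
  -- otherwise the vanishing sum would have the valuation of its largest term
  obtain ⟨i, hi, j, hj, hij, hv⟩ :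
      ∃ i ∈ P.support, ∃ j ∈ P.support, i < j ∧ v (t i) = v (t j) := by
    obtain ⟨j, hj, hmax⟩ := P.support.exists_max_image (v ∘ t) (support_nonempty.mpr hP0)
    by_contra! hne
    have hlt : ∀ i ∈ P.support \ {j}, v (t i) < v (t j) := fun i hi => by
      obtain ⟨hi, hij⟩ := Finset.mem_sdiff.mp hi
      refine (hmax i hi).lt_of_ne ?_
      rcases lt_or_gt_of_ne (Finset.notMem_singleton.mp hij) with h | h
      · exact hne i hi j hj h
      · exact (hne j hj i hi h).symm
    have := v.map_sum_eq_of_lt hj hlt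
    rw [hsum, map_zero] at this
    exact mul_ne_zero (hvc j hj) (pow_ne_zero j hvx) (by simpa [t] using this.symm)
  refine ⟨j - i, Nat.sub_ne_zero_of_lt hij, P.coeff i / P.coeff j, ?_⟩
  have hv' : v (algebraMap K L (P.coeff i)) =
      v (algebraMap K L (P.coeff j)) * v x ^ (j - i) := by
    refine mul_right_cancel₀ (pow_ne_zero i hvx) ?_
    simpa [t, mul_assoc, ← pow_add, Nat.sub_add_cancel hij.le] using hv
  rw [map_div₀, map_div₀, hv', map_pow, mul_div_cancel_left₀ _ (hvc j hj)]

namespace ValuationSubring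

instance (f : K →+* L) (R : ValuationSubring L) : Algebra (R.comap f) R :=
  (f.restrict (R.comap f) R fun _ hx => hx).toAlgebra

instance (f : K →+* L) (R : ValuationSubring L) : FaithfulSMul (R.comap f) R :=
  (faithfulSMul_iff_algebraMap_injective _ _).mpr fun _ _ h =>
    Subtype.ext (f.injective congr($h.1))

instance (f : K →+* L) (R : ValuationSubring L) : IsLocalHom (algebraMap (R.comap f) R) := by
  refine ⟨fun x hx => ?_⟩
  obtain ⟨y, hy⟩ := isUnit_iff_exists_inv.mp hx
  have hxy : f x * y = 1 := congr($hy.1)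
  have hx0 : (x : K) ≠ 0 := fun h => by simp [h] at hxy
  have hinv : (x : K)⁻¹ ∈ R.comap f := by
    rw [mem_comap, map_inv₀, inv_eq_of_mul_eq_one_right hxy]
    exact y.2
  exact isUnit_iff_exists_inv.mpr ⟨⟨_, hinv⟩, Subtype.ext (mul_inv_cancel₀ hx0)⟩

lemma ringKrullDim_comap_le (f : K →+* L) (R : ValuationSubring L) :
    ringKrullDim (R.comap f) ≤ ringKrullDim R :=
  have := Module.FaithfullyFlat.of_flat_of_isLocalHom (A := R.comap f) (B := R)
  ringKrullDim_le_of_comap_surjective _ PrimeSpectrum.comap_surjective_of_faithfullyFlat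

lemma ringKrullDim_le_comap [Algebra K L] [Algebra.IsAlgebraic K L] (R : ValuationSubring L) :
    ringKrullDim R ≤ ringKrullDim (R.comap (algebraMap K L)) := by
  refine ringKrullDim_le_of_exists_pow_associated fun x => ?_
  rcases eq_or_ne x 0 with rfl | hx0
  · exact ⟨1, one_ne_zero, 0, by simp⟩
  obtain ⟨n, hn, a, ha⟩ := R.valuation.exists_pow_eq_algebraMap_of_isAlgebraic
    (Algebra.IsAlgebraic.isAlgebraic (R := K) (x : L)) (by simpa using hx0)
  have haR : algebraMap K L a ∈ R := by
    rw [← valuation_le_one_iff, ← ha]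
    exact R.valuation_le_one (x ^ n)
  obtain ⟨u, hu⟩ := (R.valuation_eq_iff _ _).mp ha.symm
  exact ⟨n, hn, ⟨a, haR⟩, u, Subtype.ext ((mul_comm _ _).trans hu)⟩

lemma exists_comap_eq (f : K →+* L) (V : ValuationSubring K) :
    ∃ R : ValuationSubring L, R.comap f = V := by
  obtain ⟨R, hVR, hloc⟩ := IsLocalRing.exists_factor_valuationRing (f.comp V.subtype)
  refine ⟨R, le_antisymm (fun x hx => ?_) fun x hx => hVR ⟨x, hx⟩⟩
  by_contra hxV
  have hx0 : x ≠ 0 := by rintro rfl; exact hxV V.zero_mem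
  have hinv : x⁻¹ ∈ V := (V.mem_or_inv_mem x).resolve_left hxV
  have hunit : IsUnit ((f.comp V.subtype).codRestrict R.toSubring hVR ⟨x⁻¹, hinv⟩) :=
    isUnit_iff_exists_inv.mpr ⟨⟨f x, hx⟩, Subtype.ext (by simp [hx0])⟩
  obtain ⟨y, hy⟩ := isUnit_iff_exists_inv.mp (hunit.of_map _)
  have : (y : K) = x := by simpa using eq_inv_of_mul_eq_one_right congr($hy.1)
  exact hxV (this ▸ y.2)

lemma mem_of_isIntegral (R : ValuationSubring L) {x : L} (hx : IsIntegral R x) : x ∈ R := by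
  obtain ⟨y, rfl⟩ := IsIntegrallyClosed.isIntegral_iff.mp hx
  exact y.2

end ValuationSubring

end Fields

noncomputable def domainValuativeDim (D : Type*) [CommRing D] [IsDomain D] : WithBot ℕ∞ :=
  ⨆ (R : ValuationSubring (FractionRing D)),
    ⨆ (_ : Set.range (algebraMap D (FractionRing D)) ⊆ (R : Set (FractionRing D))),
      ringKrullDim R

lemma valuativeDim_eq_iSup_domainValuativeDim (A : Type*) [CommRing A] :
    valuativeDim A = ⨆ p : PrimeSpectrum A, domainValuativeDim (A ⧸ p.asIdeal) := rfl

section Domain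

variable {A B : Type*} [CommRing A] [CommRing B] [IsDomain A] [IsDomain B] [Algebra A B]
  [Algebra.IsIntegral A B] [FaithfulSMul A B]

attribute [local instance] FractionRing.liftAlgebra

instance : Algebra.IsAlgebraic (FractionRing A) (FractionRing B) :=
  have := IsLocalization.isAlgebraic (FractionRing B) (nonZeroDivisors B)
  have := Algebra.IsIntegral.trans_isAlgebraic A B (FractionRing B)
  .extendScalars (IsFractionRing.injective A (FractionRing A))

theorem domainValuativeDim_eq_of_isIntegral : domainValuativeDim B = domainValuativeDim A := by
  apply le_antisymm
  · refine iSup₂_le fun R hR => (R.ringKrullDim_le_comap (K := FractionRing A)).trans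
      (le_iSup₂_of_le (R.comap (algebraMap _ _)) ?_ le_rfl)
    rintro _ ⟨a, rfl⟩
    rw [SetLike.mem_coe, ValuationSubring.mem_comap, ← IsScalarTower.algebraMap_apply,
      IsScalarTower.algebraMap_apply A B]
    exact hR ⟨_, rfl⟩
  · refine iSup₂_le fun V hV => ?_
    obtain ⟨R, rfl⟩ := V.exists_comap_eq (algebraMap (FractionRing A) (FractionRing B))
    refine (R.ringKrullDim_comap_le _).trans (le_iSup₂_of_le R ?_ le_rfl)
    rintro _ ⟨b, rfl⟩
    let φ : A →+* R := (algebraMap A (FractionRing B)).codRestrict R fun a => by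
      simpa [← IsScalarTower.algebraMap_apply] using hV ⟨a, rfl⟩
    refine R.mem_of_isIntegral ((Algebra.IsIntegral.isIntegral b).map_of_comp_eq φ _ ?_)
    ext a
    simp [φ, ← IsScalarTower.algebraMap_apply]

end Domain

theorem domainValuativeDim_eq_of_injective_isIntegral {A B : Type*} [CommRing A] [CommRing B]
    [IsDomain A] [IsDomain B] (f : A →+* B) (hinj : Function.Injective f) (hint : f.IsIntegral) :
    domainValuativeDim B = domainValuativeDim A := by
  algebraize [f]
  have : FaithfulSMul A B := (faithfulSMul_iff_algebraMap_injective A B).mpr hinj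
  exact domainValuativeDim_eq_of_isIntegral

/-- If `f : A → B` is an injective integral ring homomorphism (so that
`Spec B → Spec A` is a dominant integral morphism), then `dim_v B = dim_v A`. -/
theorem valuativeDim_eq_of_injective_isIntegral {A B : Type*} [CommRing A] [CommRing B]
    (f : A →+* B) (hinj : Function.Injective f) (hint : f.IsIntegral) :
    valuativeDim B = valuativeDim A := by
  have key (q : PrimeSpectrum B) :
      domainValuativeDim (B ⧸ q.asIdeal) = domainValuativeDim (A ⧸ (q.comap f).asIdeal) :=
    domainValuativeDim_eq_of_injective_isIntegral _ Ideal.quotientMap_injective (hint.quotient _)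
  rw [valuativeDim_eq_iSup_domainValuativeDim, valuativeDim_eq_iSup_domainValuativeDim]
  refine le_antisymm (iSup_le fun q => (key q).trans_le (le_iSup_of_le (q.comap f) le_rfl))
    (iSup_le fun p => ?_)
  obtain ⟨q, rfl⟩ := hint.comap_surjective hinj p
  exact (key q).symm.trans_le (le_iSup_of_le q le_rfl)
end

section
/- Let {X_i} be a cofiltered diagram in the category of topological spaces with limit X. Then the Krull dimension of X is at most the supremum over i of the Krull dimensions of the X_i: dim(X) ≤ sup_i dim(X_i). -/
/-!
A strict step `Z ⊊ Z'` in a chain of irreducible closed subsets of the limit is witnessed by a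
basic open set `π_j⁻¹ V` that meets `Z'` and misses `Z`; the closures of the images in `X_i`
then stay distinct for every `i ⟶ j`. A chain has finitely many steps, so cofilteredness gives
one index `i` below all the witnesses, and the image chain in `X_i` is strict of the same length.
-/

open CategoryTheory CategoryTheory.Limits TopologicalSpace

universe u v w

theorem TopologicalSpace.IsTopologicalBasis.exists_inter_nonempty_disjoint
    {X : Type*} [TopologicalSpace X] {B : Set (Set X)} (hB : IsTopologicalBasis B)
    {Z Z' : Set X} (hZ : IsClosed Z) (h : ¬Z' ⊆ Z) :
    ∃ U ∈ B, (U ∩ Z').Nonempty ∧ Disjoint U Z := by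
  obtain ⟨x, hxZ', hxZ⟩ := Set.not_subset.mp h
  obtain ⟨U, hU, hxU, hUZ⟩ := hB.exists_subset_of_mem_open hxZ hZ.isOpen_compl
  exact ⟨U, hU, ⟨x, hxU, hxZ'⟩, Set.subset_compl_iff_disjoint_right.mp hUZ⟩

namespace TopologicalSpace.IrreducibleCloseds

variable {X Y : Type*} [TopologicalSpace X] [TopologicalSpace Y]

theorem map_lt_map_of_isOpen {f : X → Y} (hf : Continuous f) {Z Z' : IrreducibleCloseds X}
    (hle : Z ≤ Z') {V : Set Y} (hV : IsOpen V) (hmeet : (f ⁻¹' V ∩ Z').Nonempty)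
    (hmiss : Disjoint (f ⁻¹' V) Z) :
    map f hf Z < map f hf Z' := by
  refine lt_of_le_not_ge (map_mono hf hle) fun hge => ?_
  obtain ⟨x, hxV, hxZ'⟩ := hmeet
  have hclosure : closure (f '' Z) ⊆ Vᶜ :=
    closure_minimal (Set.image_subset_iff.mpr (Set.disjoint_left.mp hmiss.symm))
      hV.isClosed_compl
  exact hclosure (hge (subset_closure ⟨x, hxZ', rfl⟩)) hxV

end TopologicalSpace.IrreducibleCloseds

namespace TopCat

open TopologicalSpace.IrreducibleCloseds

variable {J : Type v} [Category.{w} J] [IsCofiltered J] {F : J ⥤ TopCat.{max v u}} {C : Cone F}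

theorem exists_map_π_lt_map_π_of_lt (hC : IsLimit C) {Z Z' : IrreducibleCloseds C.pt}
    (h : Z < Z') :
    ∃ j, ∀ ⦃i⦄, (i ⟶ j) → map (C.π.app i) (C.π.app i).hom.continuous Z <
      map (C.π.app i) (C.π.app i).hom.continuous Z' := by
  have hB := isTopologicalBasis_cofiltered_limit F C hC (fun j => {U | IsOpen U})
    (fun _ => isTopologicalBasis_opens) (fun _ => isOpen_univ) (fun _ _ _ => IsOpen.inter)
    (fun _ _ f _ hV => hV.preimage (F.map f).hom.continuous)
  obtain ⟨_, ⟨j, V, hV, rfl⟩, hmeet, hmiss⟩ :=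
    hB.exists_inter_nonempty_disjoint Z.isClosed (not_le_of_gt h)
  refine ⟨j, fun i f => ?_⟩
  have hpre : C.π.app i ⁻¹' (F.map f ⁻¹' V) = C.π.app j ⁻¹' V := by
    rw [← C.w f]
    rfl
  exact map_lt_map_of_isOpen _ h.le (hV.preimage (F.map f).hom.continuous)
    (hpre ▸ hmeet) (hpre ▸ hmiss)

theorem topologicalKrullDim_le_iSup_of_isLimit (hC : IsLimit C) :
    topologicalKrullDim C.pt ≤ ⨆ j, topologicalKrullDim (F.obj j) := by
  classical
  refine iSup_le fun p => ?_
  choose j hj using fun k : Fin p.length => exists_map_π_lt_map_π_of_lt hC (p.step k)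
  obtain ⟨i, hi⟩ := IsCofiltered.inf_objs_exists (Finset.univ.image j)
  let q : LTSeries (IrreducibleCloseds (F.obj i)) :=
    ⟨p.length, fun k => map (C.π.app i) (C.π.app i).hom.continuous (p k),
      fun k => hj k (hi (Finset.mem_image_of_mem j (Finset.mem_univ k))).some⟩
  calc (p.length : WithBot ℕ∞) = q.length := rfl
    _ ≤ topologicalKrullDim (F.obj i) := Order.LTSeries.length_le_krullDim q
    _ ≤ ⨆ j, topologicalKrullDim (F.obj j) := le_iSup (fun j => topologicalKrullDim (F.obj j)) i

end TopCat

/-- If `{X_i}` is a cofiltered diagram of topological spaces with limit `X`, then the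
Krull dimension of `X` is at most the supremum of the Krull dimensions of the `X_i`. -/
theorem topologicalKrullDim_limit_le {J : Type u} [SmallCategory J] [IsCofiltered J]
    (F : J ⥤ TopCat.{u}) :
    topologicalKrullDim (limit F : TopCat.{u}) ≤ ⨆ j : J, topologicalKrullDim (F.obj j) :=
  TopCat.topologicalKrullDim_le_iSup_of_isLimit (limit.isLimit F)
end

section
/- Let V be a henselian valuation ring and 𝔭 ⊂ V a prime ideal. Then the quotient V/𝔭 and the localization V_𝔭 are both henselian valuation rings. -/
/-!
Comparability under divisibility survives ring surjections and localization (an element of a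
localization is associated to the image of an element of the ring), and Hensel's lemma descends to
quotients by lifting the monic polynomial and the approximate root.

For `V_𝔭` the point is that its maximal ideal `𝔭V_𝔭` is just `𝔭`: an element of `𝔭` is divisible
in `V` by every `s ∉ 𝔭`. A Taylor expansion at the approximate root followed by `X ↦ X⁻¹` reduces
Hensel's lemma in a local ring to finding unit roots of monic polynomials `P ≡ Xⁿ(X - 1)`. For
`V_𝔭` such a `P` has all its coefficients in `V`, and its lift to `V` is still `≡ Xⁿ(X - 1)`
modulo `𝔭 ⊆ 𝔪_V`, so Hensel's lemma in `V` applies at `1`.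
-/

open Polynomial IsLocalRing

theorem IsLocalRing.isUnit_of_sub_one_mem_maximalIdeal {R : Type*} [CommRing R] [IsLocalRing R]
    {x : R} (h : x - 1 ∈ maximalIdeal R) : IsUnit x := by
  by_contra hx
  refine (maximalIdeal.isMaximal R).ne_top ((Ideal.eq_top_iff_one _).mpr ?_)
  simpa using sub_mem ((mem_maximalIdeal x).mpr hx) h

theorem Polynomial.eval_add_eq_eval_add_derivative_mul_add_sq_mul {R : Type*} [CommRing R]
    (f : R[X]) (a y : R) :
    f.eval (a + y) = f.eval a + f.derivative.eval a * y
      + y ^ 2 * (divX (divX (taylor a f))).eval y := by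
  have h₀ := congrArg (eval y) (X_mul_divX_add (taylor a f))
  have h₁ := congrArg (eval y) (X_mul_divX_add (divX (taylor a f)))
  simp only [eval_add, eval_mul, eval_X, eval_C, coeff_divX, zero_add, taylor_coeff_zero,
    taylor_coeff_one, taylor_eval] at h₀ h₁
  rw [add_comm a, ← h₀, ← h₁]
  ring

theorem HenselianLocalRing.of_surjective {R S : Type*} [CommRing R] [HenselianLocalRing R]
    [CommRing S] [Nontrivial S] (f : R →+* S) (hf : Function.Surjective f) :
    HenselianLocalRing S := by
  have := IsLocalHom.of_surjective f hf
  have := IsLocalRing.of_surjective f hf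
  refine ⟨fun g hg a₀ h₁ h₂ => ?_⟩
  obtain ⟨G, rfl, -, hG⟩ := lifts_and_degree_eq_and_monic (map_surjective f hf g) hg
  obtain ⟨b₀, rfl⟩ := hf a₀
  rw [derivative_map, eval_map_apply] at h₂
  rw [eval_map_apply, mem_maximalIdeal, mem_nonunits_iff, isUnit_map_iff] at h₁
  obtain ⟨a, ha, hab⟩ := HenselianLocalRing.is_henselian G hG b₀ h₁ ((isUnit_map_iff f _).mp h₂)
  refine ⟨f a, by rw [IsRoot, eval_map_apply, ha.eq_zero, map_zero], ?_⟩
  rw [← map_sub]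
  exact map_nonunit f _ hab

section Criterion

variable {R : Type*} [CommRing R] [IsLocalRing R]

theorem IsLocalRing.exists_isRoot_of_map_residue_eq_X_sub_one
    (h : ∀ (n : ℕ) (P : R[X]), P.Monic → P.map (residue R) = X ^ n * (X - 1) →
      ∃ x, IsUnit x ∧ P.IsRoot x)
    {g : R[X]} (hg : g.map (residue R) = X - 1) : ∃ z, g.IsRoot z := by
  set n := g.natDegree
  have hres : residue R (g.coeff 0) = -1 := by
    rw [← coeff_map, hg]; simp
  obtain ⟨w, hw⟩ : IsUnit (g.coeff 0) := by
    rw [← residue_ne_zero_iff_isUnit, hres]; exact neg_ne_zero.mpr one_ne_zero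
  -- The monic reversal `Xⁿ⁺¹ g(1/X) / g(0)`, whose unit roots are the inverses of roots of `g`.
  set P := C (↑w⁻¹ : R) * reflect (n + 1) g
  have hPmonic : P.Monic := by
    refine monic_of_natDegree_le_of_coeff_eq_one (n + 1) ?_ ?_
    · exact natDegree_C_mul_le _ _ |>.trans <| natDegree_reflect_le.trans (by omega)
    · rw [coeff_C_mul, coeff_reflect, revAt_le le_rfl, Nat.sub_self, ← hw, Units.inv_mul]
  have hPres : P.map (residue R) = X ^ n * (X - 1) := by
    have hwinv : residue R (↑w⁻¹ : R) = -1 := by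
      have := congrArg (residue R) w.inv_mul
      rw [map_mul, hw, hres, map_one] at this
      linear_combination -this
    rw [Polynomial.map_mul, map_C, hwinv, ← reflect_map, hg, reflect_sub, reflect_one,
      ← pow_one X, reflect_monomial, revAt_le (by omega), Nat.add_sub_cancel]
    simp only [map_neg, map_one]
    ring
  obtain ⟨x, ⟨x, rfl⟩, hPx⟩ := h n P hPmonic hPres
  have hreflect : eval₂ (RingHom.id R) (⅟(↑x⁻¹ : R)) (reflect (n + 1) g) = 0 := by
    rw [IsRoot, eval_mul, eval_C, Units.mul_right_eq_zero] at hPx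
    rwa [invOf_units, inv_inv, eval₂_id]
  refine ⟨↑x⁻¹, ?_⟩
  rwa [eval₂_reflect_eq_zero_iff _ _ _ _ (by omega), eval₂_id] at hreflect

theorem HenselianLocalRing.of_forall_exists_isUnit_isRoot
    (h : ∀ (n : ℕ) (P : R[X]), P.Monic → P.map (residue R) = X ^ n * (X - 1) →
      ∃ x, IsUnit x ∧ P.IsRoot x) :
    HenselianLocalRing R := by
  refine ⟨fun f _ a₀ h₁ ⟨e, he⟩ => ?_⟩
  set u := -f.eval a₀ * ↑e⁻¹
  have hu : u ∈ maximalIdeal R := Ideal.mul_mem_right _ _ (neg_mem h₁)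
  set Q := divX (divX (taylor a₀ f))
  -- `g(X) = f(a₀ + uX) / (eu)` with `u = -f(a₀)/e`, which reduces to `X - 1`.
  set g : R[X] := X - 1 + C (↑e⁻¹ * u) * X ^ 2 * Q.comp (C u * X)
  have hg : g.map (residue R) = X - 1 := by
    simp [g, (residue_eq_zero_iff u).mpr hu]
  have hfg : ∀ z, f.eval (a₀ + u * z) = e * u * g.eval z := by
    intro z
    have hfa : f.eval a₀ = -(e * u) := by
      simp only [u]; linear_combination (-f.eval a₀) * e.mul_inv
    rw [eval_add_eq_eval_add_derivative_mul_add_sq_mul, ← he]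
    simp only [g, eval_add, eval_sub, eval_mul, eval_pow, eval_comp, eval_C, eval_X, eval_one]
    linear_combination hfa - u ^ 2 * z ^ 2 * Q.eval (u * z) * e.mul_inv
  obtain ⟨z, hz⟩ := exists_isRoot_of_map_residue_eq_X_sub_one h hg
  refine ⟨a₀ + u * z, ?_, ?_⟩
  · rw [IsRoot, hfg, hz.eq_zero, mul_zero]
  · rw [add_sub_cancel_left]
    exact Ideal.mul_mem_right _ _ hu

end Criterion

namespace ValuationRing

theorem of_isLocalization {R : Type*} [CommRing R] [IsDomain R] [ValuationRing R]
    (M : Submonoid R) (S : Type*) [CommRing S] [IsDomain S] [Algebra R S] [IsLocalization M S] :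
    ValuationRing S := by
  rw [ValuationRing.iff_dvd_total]
  refine ⟨fun x y => ?_⟩
  obtain ⟨⟨a, s⟩, hx⟩ := IsLocalization.surj M x
  obtain ⟨⟨b, t⟩, hy⟩ := IsLocalization.surj M y
  have hxa : Associated x (algebraMap R S a) := ⟨(IsLocalization.map_units S s).unit, hx⟩
  have hyb : Associated y (algebraMap R S b) := ⟨(IsLocalization.map_units S t).unit, hy⟩
  rw [hxa.dvd_iff_dvd_left, hxa.dvd_iff_dvd_right, hyb.dvd_iff_dvd_left, hyb.dvd_iff_dvd_right]
  exact (ValuationRing.dvd_total a b).imp (map_dvd _) (map_dvd _)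

variable {V : Type*} [CommRing V] [IsDomain V] [ValuationRing V] (p : Ideal V) [p.IsPrime]

theorem maximalIdeal_atPrime_subset_range :
    (maximalIdeal (Localization.AtPrime p) : Set (Localization.AtPrime p)) ⊆
      Set.range (algebraMap V (Localization.AtPrime p)) := by
  intro x hx
  rw [SetLike.mem_coe, ← Localization.AtPrime.map_eq_maximalIdeal,
    IsLocalization.mem_map_algebraMap_iff p.primeCompl] at hx
  obtain ⟨⟨⟨a, ha⟩, s⟩, hxs⟩ := hx
  obtain ⟨c, rfl | hc⟩ := ValuationRing.cond (s : V) a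
  · refine ⟨c, (IsLocalization.map_units _ s).mul_left_cancel ?_⟩
    rw [← map_mul]
    exact hxs.symm.trans (mul_comm _ _)
  · exact absurd (hc ▸ p.mul_mem_right c ha) s.2

theorem henselianLocalRing_atPrime [HenselianLocalRing V] :
    HenselianLocalRing (Localization.AtPrime p) := by
  set S := Localization.AtPrime p
  have hp : p ≤ maximalIdeal V := le_maximalIdeal ‹p.IsPrime›.ne_top
  refine HenselianLocalRing.of_forall_exists_isUnit_isRoot fun n P hP hPres => ?_
  set P₀ : V[X] := X ^ n * (X - 1)
  have hP₀ : (P₀.map (algebraMap V S)).map (residue S) = X ^ n * (X - 1) := by simp [P₀]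
  have hlifts : P ∈ lifts (algebraMap V S) := by
    rw [lifts_iff_coeff_lifts]
    intro k
    have hk : (P - P₀.map (algebraMap V S)).coeff k ∈ maximalIdeal S := by
      rw [← residue_eq_zero_iff, ← coeff_map, Polynomial.map_sub, hPres, hP₀, sub_self,
        coeff_zero]
    obtain ⟨b, hb⟩ := maximalIdeal_atPrime_subset_range p hk
    exact ⟨b + P₀.coeff k, by rw [map_add, hb, coeff_sub, coeff_map, sub_add_cancel]⟩
  obtain ⟨F, rfl, -, hF⟩ := lifts_and_degree_eq_and_monic hlifts hP
  have h₁ : F.eval 1 ∈ p := by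
    rw [← IsLocalization.AtPrime.to_map_mem_maximal_iff S p, ← residue_eq_zero_iff,
      ← eval_map_apply, ← eval_map_apply, hPres]
    simp
  have h₂ : F.derivative.eval 1 - 1 ∈ p := by
    rw [← IsLocalization.AtPrime.to_map_mem_maximal_iff S p, ← residue_eq_zero_iff, map_sub,
      map_sub, ← eval_map_apply, ← eval_map_apply, ← derivative_map, ← derivative_map, hPres]
    simp
  obtain ⟨x, hx, hx₁⟩ := HenselianLocalRing.is_henselian F hF 1 (hp h₁)
    (isUnit_of_sub_one_mem_maximalIdeal (hp h₂))
  exact ⟨algebraMap V S x, (isUnit_of_sub_one_mem_maximalIdeal hx₁).map _,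
    by rw [IsRoot, eval_map_apply, hx.eq_zero, map_zero]⟩

end ValuationRing

/-- Let `V` be a henselian valuation ring and `𝔭 ⊂ V` a prime ideal. Then the quotient
`V/𝔭` and the localization `V_𝔭` are both henselian valuation rings. -/
theorem quotient_and_localization_henselian_valuationRing
    {V : Type*} [CommRing V] [IsDomain V] [ValuationRing V] [HenselianLocalRing V]
    (p : Ideal V) [p.IsPrime] :
    (ValuationRing (V ⧸ p) ∧ HenselianLocalRing (V ⧸ p)) ∧
    (ValuationRing (Localization.AtPrime p) ∧
      HenselianLocalRing (Localization.AtPrime p)) :=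
  ⟨⟨Function.Surjective.valuationRing _ Ideal.Quotient.mk_surjective,
      HenselianLocalRing.of_surjective _ Ideal.Quotient.mk_surjective⟩,
    ⟨ValuationRing.of_isLocalization p.primeCompl _, ValuationRing.henselianLocalRing_atPrime p⟩⟩
end

section
/- Let V be a valuation ring and 𝔭 ⊂ V a prime ideal. Then the commutative square of ring homomorphisms V → V_𝔭, V → V/𝔭, V_𝔭 → κ(𝔭), V/𝔭 → κ(𝔭) is cartesian; that is, the natural map V → V_𝔭 ×_{κ(𝔭)} V/𝔭 is an isomorphism, where κ(𝔭) = V_𝔭/𝔭V_𝔭 is the residue field of V at 𝔭. -/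
/-- The canonical map `V/𝔭 → κ(𝔭)` from the quotient to the residue field
`κ(𝔭) = V_𝔭 / 𝔭V_𝔭` of `V` at a prime `𝔭`. -/
noncomputable def quotientToResidueField {V : Type*} [CommRing V] (p : Ideal V)
    [p.IsPrime] :
    V ⧸ p →+* IsLocalRing.ResidueField (Localization.AtPrime p) :=
  Ideal.Quotient.lift p
    ((IsLocalRing.residue (Localization.AtPrime p)).comp
      (algebraMap V (Localization.AtPrime p)))
    (fun a ha => by
      have h : algebraMap V (Localization.AtPrime p) a ∈
          IsLocalRing.maximalIdeal (Localization.AtPrime p) :=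
        (IsLocalization.AtPrime.to_map_mem_maximal_iff _ p a).mpr ha
      exact Ideal.Quotient.eq_zero_iff_mem.mpr h)

/-!
In a valuation ring `V`, an element outside an ideal divides every element inside it. Hence
every fraction `s / t` with `s ∈ 𝔭`, `t ∉ 𝔭` already lies in `𝔭`, i.e. `𝔭V_𝔭 = 𝔭`. Given a
compatible pair `(a, c̄)`, the difference `a - c` lies in `𝔭V_𝔭`, so it is some `u ∈ 𝔭`, and
`c + u` is the required lift.
-/

theorem PreValuationRing.dvd_of_mem_of_notMem {R : Type*} [CommRing R] [PreValuationRing R]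
    {I : Ideal R} {s t : R} (hs : s ∈ I) (ht : t ∉ I) : t ∣ s := by
  obtain ⟨w, hw | hw⟩ := PreValuationRing.cond s t
  · exact absurd (hw ▸ I.mul_mem_right w hs) ht
  · exact ⟨w, hw.symm⟩

theorem PreValuationRing.exists_mem_algebraMap_eq_of_mem_maximalIdeal {R : Type*} [CommRing R]
    [PreValuationRing R] (p : Ideal R) [p.IsPrime] {y : Localization.AtPrime p}
    (hy : y ∈ IsLocalRing.maximalIdeal (Localization.AtPrime p)) :
    ∃ u ∈ p, algebraMap R (Localization.AtPrime p) u = y := by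
  obtain ⟨⟨s, t⟩, rfl⟩ := IsLocalization.mk'_surjective p.primeCompl y
  have hs : s ∈ p := (IsLocalization.AtPrime.mk'_mem_maximal_iff _ p s t).mp hy
  obtain ⟨w, rfl⟩ := dvd_of_mem_of_notMem hs t.2
  exact ⟨w, (‹p.IsPrime›.mem_or_mem hs).resolve_left t.2,
    (IsLocalization.mk'_mul_cancel_left w t).symm⟩

theorem quotientToResidueField_mk {V : Type*} [CommRing V] (p : Ideal V) [p.IsPrime] (c : V) :
    quotientToResidueField p (Ideal.Quotient.mk p c) =
      IsLocalRing.residue _ (algebraMap V (Localization.AtPrime p) c) :=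
  rfl

/-- Let `V` be a valuation ring and `𝔭 ⊂ V` a prime ideal. Then the square
`V → V_𝔭`, `V → V/𝔭`, `V_𝔭 → κ(𝔭)`, `V/𝔭 → κ(𝔭)` is cartesian: the natural map
`V → V_𝔭 ×_{κ(𝔭)} V/𝔭` is an isomorphism (i.e. `x ↦ (x, x̄)` is injective, and every
compatible pair `(a, b)` lifts to some `x ∈ V`). -/
theorem valuationRing_milnor_square_cartesian
    {V : Type*} [CommRing V] [IsDomain V] [ValuationRing V] (p : Ideal V) [p.IsPrime] :
    (Function.Injective fun x : V =>
      (algebraMap V (Localization.AtPrime p) x, Ideal.Quotient.mk p x)) ∧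
    ∀ (a : Localization.AtPrime p) (b : V ⧸ p),
      IsLocalRing.residue (Localization.AtPrime p) a = quotientToResidueField p b →
      ∃ x : V, algebraMap V (Localization.AtPrime p) x = a ∧ Ideal.Quotient.mk p x = b := by
  refine ⟨fun x y h ↦ IsLocalization.injective (Localization.AtPrime p)
    p.primeCompl_le_nonZeroDivisors (congrArg Prod.fst h), fun a b hab ↦ ?_⟩
  obtain ⟨c, rfl⟩ := Ideal.Quotient.mk_surjective b
  rw [quotientToResidueField_mk, ← sub_eq_zero, ← map_sub, IsLocalRing.residue_eq_zero_iff] at hab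
  obtain ⟨u, hu, hua⟩ :=
    PreValuationRing.exists_mem_algebraMap_eq_of_mem_maximalIdeal p hab
  refine ⟨c + u, by rw [map_add, hua, add_sub_cancel], ?_⟩
  rw [map_add, Ideal.Quotient.eq_zero_iff_mem.mpr hu, add_zero]
end

section
/- Every cdv cover of schemes is a v cover. That is, if a quasi-compact quasi-separated morphism of schemes f : Y → X is such that for every henselian valuation ring V, every morphism Spec V → X lifts to a morphism Spec V → Y over X, then for every valuation ring V and every morphism Spec V → X there exist an extension of valuation rings V ⊆ W (an injective local ring homomorphism of valuation rings) and a morphism Spec W → Y whose composite with f equals the composite Spec W → Spec V → X. -/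
/-!
Embed `V` into a valuation ring `W` of an algebraic closure `K` of its fraction field that
dominates it. Being a valuation ring, `W` is integrally closed in `K`, so every monic polynomial
over `W` is a product of linear factors `X - r` with `r ∈ W`; if `f(a₀)` lies in the maximal
ideal, one of the factors `a₀ - r` does, and `r` is the root that Hensel's lemma asks for.
Thus `W` is henselian, and the cdv hypothesis lifts `Spec W → Spec V → X` to `Y`.
-/

open AlgebraicGeometry CategoryTheory Polynomial

universe u

theorem Polynomial.Monic.splits_of_isIntegrallyClosedIn {R : Type*} (K : Type*) [CommRing R]
    [Field K] [IsAlgClosed K] [Algebra R K] [IsIntegrallyClosedIn R K] {f : R[X]} (hf : f.Monic) :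
    f.Splits := by
  have : CanLift K R (algebraMap R K) (IsIntegral R) :=
    ⟨fun _ hx => IsIntegrallyClosedIn.isIntegral_iff.mp hx⟩
  lift f.aroots K to Multiset R using fun r hr =>
    ⟨f, hf, by rw [eval₂_eq_eval_map]; exact isRoot_of_mem_roots hr⟩ with m hm
  refine splits_iff_exists_multiset.mpr ⟨m, ?_⟩
  apply map_injective _ (IsIntegralClosure.algebraMap_injective R R K)
  rw [(IsAlgClosed.splits (f.map (algebraMap R K))).eq_prod_roots_of_monic (hf.map _),
    ← aroots_def, ← hm]
  simp [hf.leadingCoeff, Polynomial.map_multiset_prod, Multiset.map_map]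

theorem HenselianLocalRing.of_isIntegrallyClosedIn_of_isAlgClosed (R K : Type*) [CommRing R]
    [IsLocalRing R] [Field K] [IsAlgClosed K] [Algebra R K] [IsIntegrallyClosedIn R K] :
    HenselianLocalRing R where
  is_henselian f hf a₀ ha₀ _ := by
    obtain ⟨m, hfm⟩ := splits_iff_exists_multiset.mp (hf.splits_of_isIntegrallyClosedIn K)
    rw [hf.leadingCoeff, C_1, one_mul] at hfm
    have heval (b : R) : f.eval b = (m.map (b - ·)).prod := by
      simp [hfm, eval_multiset_prod, Multiset.map_map]
    obtain ⟨_, hx, hxm⟩ := (Ideal.IsPrime.multiset_prod_mem_iff_exists_mem inferInstance _).mp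
      (heval a₀ ▸ ha₀)
    obtain ⟨r, hr, rfl⟩ := Multiset.mem_map.mp hx
    refine ⟨r, ?_, by simpa using (IsLocalRing.maximalIdeal R).neg_mem hxm⟩
    rw [IsRoot, heval]
    exact Multiset.prod_eq_zero (Multiset.mem_map.mpr ⟨r, hr, sub_self r⟩)

theorem IsLocalRing.exists_injective_isLocalHom_henselian_valuationRing (V : Type u) [CommRing V]
    [IsDomain V] [IsLocalRing V] :
    ∃ (W : Type u) (_ : CommRing W) (_ : IsDomain W) (_ : ValuationRing W)
      (_ : HenselianLocalRing W) (ι : V →+* W), Function.Injective ι ∧ IsLocalHom ι := by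
  let K := AlgebraicClosure (FractionRing V)
  let φ : V →+* K := (algebraMap (FractionRing V) K).comp (algebraMap V (FractionRing V))
  have hφ : Function.Injective φ :=
    (algebraMap (FractionRing V) K).injective.comp (IsFractionRing.injective V (FractionRing V))
  obtain ⟨A, hφA, hloc⟩ := IsLocalRing.exists_factor_valuationRing φ
  exact ⟨A, inferInstance, inferInstance, inferInstance,
    .of_isIntegrallyClosedIn_of_isAlgClosed A K, φ.codRestrict A.toSubring hφA,
    fun a b hab => hφ congr(($hab).1), hloc⟩

theorem cdv_cover_is_v_cover_general {X Y : Scheme.{u}} (f : Y ⟶ X)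
    (hcdv : ∀ (V : Type u) [CommRing V] [IsDomain V] [ValuationRing V]
      [HenselianLocalRing V] (g : Spec (CommRingCat.of V) ⟶ X),
      ∃ l : Spec (CommRingCat.of V) ⟶ Y, l ≫ f = g) :
    ∀ (V : Type u) [CommRing V] [IsDomain V] [ValuationRing V]
      (g : Spec (CommRingCat.of V) ⟶ X),
      ∃ (W : Type u) (_ : CommRing W) (_ : IsDomain W) (_ : ValuationRing W)
        (ι : V →+* W), Function.Injective ι ∧ IsLocalHom ι ∧
        ∃ l : Spec (CommRingCat.of W) ⟶ Y,
          l ≫ f = Spec.map (CommRingCat.ofHom ι) ≫ g := by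
  intro V _ _ _ g
  obtain ⟨W, _, _, _, _, ι, hι, hloc⟩ :=
    IsLocalRing.exists_injective_isLocalHom_henselian_valuationRing V
  obtain ⟨l, hl⟩ := hcdv W (Spec.map (CommRingCat.ofHom ι) ≫ g)
  exact ⟨W, inferInstance, inferInstance, inferInstance, ι, hι, hloc, l, hl⟩

/-- Every cdv cover is a v cover: if `f : Y → X` is a qcqs morphism of schemes such
that every morphism `Spec V → X` with `V` a henselian valuation ring lifts to `Y`,
then for every valuation ring `V` and morphism `Spec V → X` there is an extension of
valuation rings `V ⊆ W` (an injective local ring homomorphism) and a morphism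
`Spec W → Y` lying over `Spec W → Spec V → X`. -/
theorem cdv_cover_is_v_cover {X Y : Scheme.{u}} (f : Y ⟶ X)
    [QuasiCompact f] [QuasiSeparated f]
    (hcdv : ∀ (V : Type u) [CommRing V] [IsDomain V] [ValuationRing V]
      [HenselianLocalRing V] (g : Spec (CommRingCat.of V) ⟶ X),
      ∃ l : Spec (CommRingCat.of V) ⟶ Y, l ≫ f = g) :
    ∀ (V : Type u) [CommRing V] [IsDomain V] [ValuationRing V]
      (g : Spec (CommRingCat.of V) ⟶ X),
      ∃ (W : Type u) (_ : CommRing W) (_ : IsDomain W) (_ : ValuationRing W)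
        (ι : V →+* W), Function.Injective ι ∧ IsLocalHom ι ∧
        ∃ l : Spec (CommRingCat.of W) ⟶ Y,
          l ≫ f = Spec.map (CommRingCat.ofHom ι) ≫ g :=
  cdv_cover_is_v_cover_general f hcdv
end

section
/- Every cdarc cover of schemes is an arc cover. That is, if a quasi-compact quasi-separated morphism of schemes f : Y → X is such that for every henselian valuation ring V of Krull dimension at most 1, every morphism Spec V → X lifts to a morphism Spec V → Y over X, then for every valuation ring V of Krull dimension at most 1 and every morphism Spec V → X there exist an extension of valuation rings V ⊆ W (an injective local ring homomorphism of valuation rings) with W of Krull dimension at most 1, and a morphism Spec W → Y whose composite with f equals the composite Spec W → Spec V → X. -/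
open AlgebraicGeometry CategoryTheory Polynomial

universe u

/-!
Let `W` be a valuation ring of an algebraic closure of `Frac V` dominating `V`. Every monic
polynomial over `W` splits into linear factors (its roots are integral over `W`), so `W` is
henselian. As the extension of fraction fields is algebraic, two terms of a vanishing sum
`∑ cᵢ wⁱ` share the largest valuation, so some power of each `w ∈ W` is associated to an element
of `V`. Hence `Spec W → Spec V` is strictly monotone and `dim W ≤ dim V`.
-/

theorem HenselianLocalRing.of_isAlgClosed_fractionRing (R L : Type*) [CommRing R] [IsDomain R]
    [IsLocalRing R] [IsIntegrallyClosed R] [Field L] [Algebra R L] [IsFractionRing R L]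
    [IsAlgClosed L] : HenselianLocalRing R where
  is_henselian f hf a₀ h₁ _ := by
    have hsplit : f.Splits :=
      Splits.of_splits_map_of_injective (IsFractionRing.injective R L) (IsAlgClosed.splits _)
        fun a ha => IsIntegrallyClosed.isIntegral_iff.mp
          ⟨f, hf, by rwa [eval₂_eq_eval_map, ← IsRoot, ← mem_roots (hf.map _).ne_zero]⟩
    rw [hsplit.eval_eq_prod_roots_of_monic hf,
      (IsLocalRing.maximalIdeal.isMaximal R).isPrime.multiset_prod_mem_iff_exists_mem] at h₁
    obtain ⟨_, hmem, hr⟩ := h₁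
    obtain ⟨r, hroot, rfl⟩ := Multiset.mem_map.mp hmem
    exact ⟨r, (mem_roots hf.ne_zero).mp hroot, by rw [← neg_sub]; exact neg_mem hr⟩

theorem Valuation.exists_ne_map_eq_of_sum_eq_zero {R Γ₀ ι : Type*} [Ring R]
    [LinearOrderedCommMonoidWithZero Γ₀] (v : Valuation R Γ₀) {s : Finset ι} {f : ι → R}
    (hsum : ∑ i ∈ s, f i = 0) (hf : ∃ i ∈ s, v (f i) ≠ 0) :
    ∃ i ∈ s, ∃ j ∈ s, i ≠ j ∧ v (f i) = v (f j) := by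
  classical
  obtain ⟨i, hi, hi0⟩ := hf
  obtain ⟨j, hj, hmax⟩ := s.exists_max_image (fun i => v (f i)) ⟨i, hi⟩
  have hj0 : v (f j) ≠ 0 := fun h => hi0 (le_zero_iff.mp (h ▸ hmax i hi))
  by_contra! hne
  have hsum_val := v.map_sum_eq_of_lt hj fun k hk => by
    obtain ⟨hks, hkj⟩ := Finset.mem_sdiff.mp hk
    exact (hmax k hks).lt_of_ne (hne k hks j hj (by simpa using hkj))
  rw [hsum, map_zero] at hsum_val
  exact hj0 hsum_val.symm

theorem Valuation.exists_pow_eq_map_algebraMap {K L Γ₀ : Type*} [Field K] [Field L]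
    [Algebra K L] [LinearOrderedCommGroupWithZero Γ₀] (v : Valuation L Γ₀) {x : L}
    (hx : IsAlgebraic K x) (hx0 : x ≠ 0) :
    ∃ d, 0 < d ∧ ∃ z : K, v (x ^ d) = v (algebraMap K L z) := by
  obtain ⟨p, hp0, hpx⟩ := hx
  have hcoeff : ∀ i ∈ p.support, v (algebraMap K L (p.coeff i)) ≠ 0 := fun i hi => by
    simpa using mem_support_iff.mp hi
  have hsum : ∑ i ∈ p.support, algebraMap K L (p.coeff i) * x ^ i = 0 := by
    rw [← hpx, aeval_def, eval₂_eq_sum, Polynomial.sum_def]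
  obtain ⟨i₀, hi₀⟩ := nonempty_support_iff.mpr hp0
  obtain ⟨i, hi, j, hj, hij, heq⟩ := v.exists_ne_map_eq_of_sum_eq_zero hsum
    ⟨i₀, hi₀, by simpa [hx0] using hcoeff i₀ hi₀⟩
  have of_lt : ∀ a ∈ p.support, ∀ b ∈ p.support, a < b →
      v (algebraMap K L (p.coeff a) * x ^ a) = v (algebraMap K L (p.coeff b) * x ^ b) →
      ∃ d, 0 < d ∧ ∃ z : K, v (x ^ d) = v (algebraMap K L z) := by
    intro a ha b hb hab heq
    obtain ⟨c, rfl⟩ := Nat.exists_eq_add_of_lt hab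
    refine ⟨c + 1, c.succ_pos, p.coeff a / p.coeff (a + c + 1), ?_⟩
    rw [map_div₀, map_div₀, eq_div_iff (hcoeff _ hb), map_pow]
    apply mul_right_cancel₀ (pow_ne_zero a (v.ne_zero_iff.mpr hx0))
    simp only [map_mul, map_pow] at heq
    rw [heq, mul_right_comm, ← pow_add, mul_comm, add_comm (c + 1) a, add_assoc]
  rcases hij.lt_or_gt with h | h
  · exact of_lt i hi j hj h heq
  · exact of_lt j hj i hi h heq.symm

theorem PrimeSpectrum.comap_strictMono_of_exists_associated_pow {R S : Type*} [CommRing R]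
    [CommRing S] (f : R →+* S) (h : ∀ s : S, ∃ d, 0 < d ∧ ∃ r : R, Associated (s ^ d) (f r)) :
    StrictMono (PrimeSpectrum.comap f) := by
  intro p q hpq
  have hle : comap f p ≤ comap f q := Ideal.comap_mono hpq.le
  refine hle.lt_of_ne fun heq => ?_
  obtain ⟨s, hsq, hsp⟩ := SetLike.exists_of_lt (show p.asIdeal < q.asIdeal from hpq)
  obtain ⟨d, hd, r, hr⟩ := h s
  have hrq : r ∈ (comap f q).asIdeal :=
    (Ideal.mem_iff_of_associated hr).mp (q.asIdeal.pow_mem_of_mem hsq d hd)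
  rw [← heq] at hrq
  exact hsp (p.isPrime.mem_of_pow_mem d ((Ideal.mem_iff_of_associated hr).mpr hrq))

theorem ringKrullDim_le_of_exists_associated_pow {R S : Type*} [CommRing R] [CommRing S]
    (f : R →+* S) (h : ∀ s : S, ∃ d, 0 < d ∧ ∃ r : R, Associated (s ^ d) (f r)) :
    ringKrullDim S ≤ ringKrullDim R :=
  Order.krullDim_le_of_strictMono _ (PrimeSpectrum.comap_strictMono_of_exists_associated_pow f h)

section DominatingValuationSubring

variable {V K L : Type*} [CommRing V] [IsDomain V] [ValuationRing V] [Field K] [Algebra V K]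
  [IsFractionRing V K] [Field L] [Algebra K L] {A : ValuationSubring L} (ι : V →+* A)

theorem ValuationRing.exists_algebraMap_eq_of_algebraMap_mem [IsLocalHom ι]
    (hι : ∀ t, (ι t : L) = algebraMap K L (algebraMap V K t)) {z : K}
    (hz : algebraMap K L z ∈ A) : ∃ t : V, algebraMap V K t = z := by
  rcases eq_or_ne z 0 with rfl | hz0
  · exact ⟨0, map_zero _⟩
  rcases ValuationRing.isInteger_or_isInteger V z with h | ⟨t, ht⟩
  · exact h
  have hunit : IsUnit (ι t) := IsUnit.of_mul_eq_one ⟨_, hz⟩ <| Subtype.ext <| by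
    simp [hι, ht, hz0]
  obtain ⟨u, rfl⟩ := hunit.of_map
  exact ⟨↑u⁻¹, by rw [map_units_inv, ht, inv_inv]⟩

theorem ValuationSubring.exists_associated_pow_of_isLocalHom [IsLocalHom ι]
    [Algebra.IsAlgebraic K L] (hι : ∀ t, (ι t : L) = algebraMap K L (algebraMap V K t))
    (w : A) : ∃ d, 0 < d ∧ ∃ t : V, Associated (w ^ d) (ι t) := by
  rcases eq_or_ne w 0 with rfl | hw
  · exact ⟨1, one_pos, 0, by simp⟩
  obtain ⟨d, hd, z, hz⟩ := A.valuation.exists_pow_eq_map_algebraMap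
    (Algebra.IsAlgebraic.isAlgebraic (R := K) (w : L)) (by simpa using hw)
  have hzA : algebraMap K L z ∈ A :=
    A.mem_of_valuation_le_one _ (hz ▸ A.valuation_le_one (w ^ d))
  obtain ⟨t, rfl⟩ := ValuationRing.exists_algebraMap_eq_of_algebraMap_mem ι hι hzA
  obtain ⟨u, hu⟩ := (A.valuation_eq_iff _ _).mp hz
  exact ⟨d, hd, t, Associated.symm ⟨u, Subtype.ext (by simp [hι, ← hu, mul_comm])⟩⟩

end DominatingValuationSubring

theorem ValuationRing.exists_henselian_extension (V : Type u) [CommRing V] [IsDomain V]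
    [ValuationRing V] :
    ∃ (W : Type u) (_ : CommRing W) (_ : IsDomain W) (_ : ValuationRing W)
      (_ : HenselianLocalRing W), ringKrullDim W ≤ ringKrullDim V ∧
      ∃ ι : V →+* W, Function.Injective ι ∧ IsLocalHom ι := by
  let K := FractionRing V
  let L := AlgebraicClosure K
  have := ValuationRing.isLocalRing V
  obtain ⟨A, hmem, hloc⟩ :=
    IsLocalRing.exists_factor_valuationRing ((algebraMap K L).comp (algebraMap V K))
  set ι := ((algebraMap K L).comp (algebraMap V K)).codRestrict A.toSubring hmem
  have hι : ∀ t, (ι t : L) = algebraMap K L (algebraMap V K t) := fun _ => rfl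
  have hinj : Function.Injective ι := fun s t hst =>
    IsFractionRing.injective V K <| (algebraMap K L).injective <| by
      rw [← hι, ← hι, hst]
  exact ⟨A, inferInstance, inferInstance, inferInstance, .of_isAlgClosed_fractionRing A L,
    ringKrullDim_le_of_exists_associated_pow ι
      (ValuationSubring.exists_associated_pow_of_isLocalHom ι hι), ι, hinj, hloc⟩

theorem cdarc_cover_is_arc_cover_general {X Y : Scheme.{u}} (f : Y ⟶ X)
    (hcdarc : ∀ (V : Type u) [CommRing V] [IsDomain V] [ValuationRing V]
      [HenselianLocalRing V], ringKrullDim V ≤ 1 →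
      ∀ g : Spec (CommRingCat.of V) ⟶ X,
      ∃ l : Spec (CommRingCat.of V) ⟶ Y, l ≫ f = g) :
    ∀ (V : Type u) [CommRing V] [IsDomain V] [ValuationRing V], ringKrullDim V ≤ 1 →
      ∀ g : Spec (CommRingCat.of V) ⟶ X,
      ∃ (W : Type u) (_ : CommRing W) (_ : IsDomain W) (_ : ValuationRing W),
        ringKrullDim W ≤ 1 ∧
        ∃ ι : V →+* W, Function.Injective ι ∧ IsLocalHom ι ∧
        ∃ l : Spec (CommRingCat.of W) ⟶ Y,
          l ≫ f = Spec.map (CommRingCat.ofHom ι) ≫ g := by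
  intro V _ _ _ hV g
  obtain ⟨W, _, _, _, _, hdim, ι, hinj, hloc⟩ := ValuationRing.exists_henselian_extension V
  obtain ⟨l, hl⟩ := hcdarc W (hdim.trans hV) (Spec.map (CommRingCat.ofHom ι) ≫ g)
  exact ⟨W, inferInstance, inferInstance, inferInstance, hdim.trans hV, ι, hinj, hloc, l, hl⟩

/-- Every cdarc cover is an arc cover: if `f : Y → X` is a qcqs morphism of schemes
such that every morphism `Spec V → X` with `V` a henselian valuation ring of Krull
dimension at most `1` lifts to `Y`, then for every valuation ring `V` of Krull
dimension at most `1` and morphism `Spec V → X` there is an extension of valuation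
rings `V ⊆ W` (an injective local ring homomorphism) with `W` of Krull dimension at
most `1`, and a morphism `Spec W → Y` lying over `Spec W → Spec V → X`. -/
theorem cdarc_cover_is_arc_cover {X Y : Scheme.{u}} (f : Y ⟶ X)
    [QuasiCompact f] [QuasiSeparated f]
    (hcdarc : ∀ (V : Type u) [CommRing V] [IsDomain V] [ValuationRing V]
      [HenselianLocalRing V], ringKrullDim V ≤ 1 →
      ∀ g : Spec (CommRingCat.of V) ⟶ X,
      ∃ l : Spec (CommRingCat.of V) ⟶ Y, l ≫ f = g) :
    ∀ (V : Type u) [CommRing V] [IsDomain V] [ValuationRing V], ringKrullDim V ≤ 1 →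
      ∀ g : Spec (CommRingCat.of V) ⟶ X,
      ∃ (W : Type u) (_ : CommRing W) (_ : IsDomain W) (_ : ValuationRing W),
        ringKrullDim W ≤ 1 ∧
        ∃ ι : V →+* W, Function.Injective ι ∧ IsLocalHom ι ∧
        ∃ l : Spec (CommRingCat.of W) ⟶ Y,
          l ≫ f = Spec.map (CommRingCat.ofHom ι) ≫ g :=
  cdarc_cover_is_arc_cover_general f hcdarc
end

section
/- Let f : A → B be a ring homomorphism and I ⊆ A an ideal forming a Milnor square, i.e., the natural map A → B ×_{B/IB} A/I is an isomorphism, where IB denotes the ideal of B generated by f(I). Let V be a valuation ring of Krull dimension at most 1 and g : A → V any ring homomorphism. Then either g(I) = 0 (so g factors through A/I), or there exists a ring homomorphism h : B → V with h ∘ f = g. -/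
/-!
Choose `t ∈ I` with `g t ≠ 0`. Since `f` is injective on `I` and `f(I)` is an ideal of `B`, every
`b ∈ B` has a unique `c b ∈ I` with `f (c b) = b * f t`, and `b ↦ g (c b) / g t` respects `+`, `*`
and `f`; so `g` factors through `f` as soon as `g t ∣ g (c b)`. Comparing images under `f` gives
`t ^ n ∣ t * (c b) ^ n` in `A`, hence `g t ^ n ∣ g t * g (c b) ^ n` for all `n`. A valuation ring of
dimension at most one is completely integrally closed (its maximal ideal is the radical of every
nonzero principal ideal), which turns this into `g t ∣ g (c b)`.
-/

/-- The induced map `A/I → B/IB` of a ring homomorphism `f : A → B` and ideal `I ⊆ A`,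
where `IB = I.map f` is the ideal of `B` generated by `f(I)`. -/
def quotientMapOfMilnor {A B : Type*} [CommRing A] [CommRing B] (f : A →+* B)
    (I : Ideal A) : A ⧸ I →+* B ⧸ I.map f :=
  Ideal.Quotient.lift I ((Ideal.Quotient.mk (I.map f)).comp f)
    (fun _ ha => Ideal.Quotient.eq_zero_iff_mem.mpr (Ideal.mem_map_of_mem f ha))

/-- `(f : A → B, I ⊆ A)` is a Milnor square if the natural ring map
`A → B ×_{B/IB} A/I` is an isomorphism, i.e. `a ↦ (f a, ā)` is injective and every
pair `(b, c) ∈ B × A/I` with equal image in `B/IB` lifts to some `a ∈ A`. -/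
def IsMilnorSquare {A B : Type*} [CommRing A] [CommRing B] (f : A →+* B)
    (I : Ideal A) : Prop :=
  (Function.Injective fun a : A => (f a, Ideal.Quotient.mk I a)) ∧
  ∀ (b : B) (c : A ⧸ I), Ideal.Quotient.mk (I.map f) b = quotientMapOfMilnor f I c →
    ∃ a : A, f a = b ∧ Ideal.Quotient.mk I a = c

theorem IsLocalRing.maximalIdeal_le_radical_span_singleton {R : Type*} [CommRing R] [IsDomain R]
    [IsLocalRing R] [Ring.KrullDimLE 1 R] {x : R} (hx : x ≠ 0) :
    maximalIdeal R ≤ (Ideal.span {x}).radical := by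
  rw [Ideal.radical_eq_sInf]
  refine le_sInf fun J ⟨hxJ, hJ⟩ => (eq_maximalIdeal (hJ.isMaximal_of_ne_bot ?_)).ge
  rintro rfl
  exact hx (by simpa using hxJ)

theorem IsLocalRing.exists_pow_not_dvd {R : Type*} [CommRing R] [IsDomain R] [IsLocalRing R]
    [Ring.KrullDimLE 1 R] {x y : R} (hx : x ≠ 0) (hy : ¬IsUnit y) : ∃ n, ¬y ^ n ∣ x := by
  obtain ⟨m, hm⟩ := maximalIdeal_le_radical_span_singleton hx ((mem_maximalIdeal y).mpr hy)
  refine ⟨m + 1, fun hdvd => ?_⟩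
  have hy0 : y ≠ 0 := by
    rintro rfl
    exact hx (zero_dvd_iff.mp (by simpa using hdvd))
  have := (pow_dvd_pow_iff hy0 hy).mp (hdvd.trans (Ideal.mem_span_singleton.mp hm))
  omega

theorem ValuationRing.dvd_of_forall_pow_dvd_mul_pow {V : Type*} [CommRing V] [IsDomain V]
    [ValuationRing V] [Ring.KrullDimLE 1 V] {d s u : V} (hd : d ≠ 0)
    (h : ∀ n : ℕ, s ^ n ∣ d * u ^ n) : s ∣ u := by
  obtain ⟨y, hsy | huy⟩ := ValuationRing.cond s u
  · exact ⟨y, hsy.symm⟩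
  by_cases hu : u = 0
  · exact hu ▸ dvd_zero s
  by_cases hyu : IsUnit y
  · exact ⟨↑hyu.unit⁻¹, by rw [← huy, mul_assoc, IsUnit.mul_val_inv, mul_one]⟩
  obtain ⟨n, hn⟩ := IsLocalRing.exists_pow_not_dvd hd hyu
  refine absurd ?_ hn
  have := h n
  rwa [← huy, mul_pow, mul_comm d, mul_dvd_mul_iff_left (pow_ne_zero n hu)] at this

theorem AddMonoidHom.exists_ringHom_mul_eq {B V : Type*} [CommRing B] [CommRing V] [IsDomain V]
    {s : V} (hs : s ≠ 0) (ψ : B →+ V) (h_one : ψ 1 = s)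
    (h_mul : ∀ b b', s * ψ (b * b') = ψ b * ψ b') (h_dvd : ∀ b, s ∣ ψ b) :
    ∃ h : B →+* V, ∀ b, s * h b = ψ b := by
  choose w hw using h_dvd
  refine ⟨{ toFun := w
            map_one' := mul_left_cancel₀ hs (by rw [← hw, h_one, mul_one])
            map_mul' := fun b b' => mul_left_cancel₀ hs (mul_left_cancel₀ hs ?_)
            map_zero' := mul_left_cancel₀ hs (by rw [← hw, map_zero, mul_zero])
            map_add' := fun b b' =>
              mul_left_cancel₀ hs (by rw [mul_add, ← hw, ← hw, ← hw, map_add]) },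
    fun b => (hw b).symm⟩
  calc s * (s * w (b * b')) = s * ψ (b * b') := by rw [← hw]
    _ = s * w b * (s * w b') := by rw [h_mul, ← hw, ← hw]
    _ = s * (s * (w b * w b')) := by ring

namespace IsMilnorSquare

variable {A B : Type*} [CommRing A] [CommRing B] {f : A →+* B} {I : Ideal A}

theorem injOn (hM : IsMilnorSquare f I) : Set.InjOn f I := fun _ hx _ hy hxy =>
  hM.1 (Prod.ext hxy (Ideal.Quotient.eq.mpr (I.sub_mem hx hy)))

theorem exists_mem_map_eq_mul (hM : IsMilnorSquare f I) (b : B) {t : A} (ht : t ∈ I) :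
    ∃ a ∈ I, f a = b * f t := by
  obtain ⟨a, hfa, ha⟩ := hM.2 (b * f t) 0 (by
    rw [map_zero, Ideal.Quotient.eq_zero_iff_mem]
    exact Ideal.mul_mem_left _ b (Ideal.mem_map_of_mem f ht))
  exact ⟨a, Ideal.Quotient.eq_zero_iff_mem.mp ha, hfa⟩

theorem pow_dvd_mul_pow (hM : IsMilnorSquare f I) {t a : A} {b : B} (ht : t ∈ I)
    (hab : f a = b * f t) (n : ℕ) : t ^ n ∣ t * a ^ n := by
  obtain ⟨c, hc, hfc⟩ := hM.exists_mem_map_eq_mul (b ^ n) ht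
  refine ⟨c, hM.injOn (I.mul_mem_right _ ht) (I.mul_mem_left _ hc) ?_⟩
  simp only [map_mul, map_pow, hab, hfc]
  ring

theorem exists_ringHom_comp_eq (hM : IsMilnorSquare f I) {V : Type*} [CommRing V] [IsDomain V]
    (g : A →+* V) {t : A} (ht : t ∈ I) (hgt : g t ≠ 0)
    (hdvd : ∀ a b, f a = b * f t → g t ∣ g a) : ∃ h : B →+* V, h.comp f = g := by
  choose c hcI hc using fun b => hM.exists_mem_map_eq_mul b ht
  have c_add (b b' : B) : c (b + b') = c b + c b' :=
    hM.injOn (hcI _) (I.add_mem (hcI b) (hcI b')) (by simp only [map_add, hc, add_mul])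
  have c_mul (b b' : B) : t * c (b * b') = c b * c b' :=
    hM.injOn (I.mul_mem_left _ (hcI _)) (I.mul_mem_right _ (hcI b)) (by
      simp only [map_mul, hc]
      ring)
  have c_one : c 1 = t := hM.injOn (hcI 1) ht (by rw [hc, one_mul])
  have c_map (x : A) : c (f x) = x * t :=
    hM.injOn (hcI _) (I.mul_mem_left x ht) (by rw [hc, map_mul])
  obtain ⟨h, hh⟩ := (AddMonoidHom.mk' (g ∘ c) fun b b' => by simp [c_add]).exists_ringHom_mul_eq
    hgt (by simp [c_one]) (fun b b' => by simp [← map_mul, c_mul]) (fun b => hdvd _ b (hc b))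
  refine ⟨h, RingHom.ext fun x => mul_left_cancel₀ hgt ?_⟩
  rw [RingHom.comp_apply, hh, AddMonoidHom.mk'_apply, Function.comp_apply, c_map, map_mul, mul_comm]

end IsMilnorSquare

/-- Let `(f : A → B, I)` be a Milnor square and `g : A → V` a ring homomorphism into a
valuation ring `V` of Krull dimension at most `1`. Then either `g(I) = 0` (so `g`
factors through `A/I`), or `g` factors through `f`. -/
theorem milnor_square_factor_of_rank_le_one {A B V : Type*}
    [CommRing A] [CommRing B] [CommRing V] [IsDomain V] [ValuationRing V]
    (f : A →+* B) (I : Ideal A) (hM : IsMilnorSquare f I)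
    (hV : ringKrullDim V ≤ 1) (g : A →+* V) :
    (∀ x ∈ I, g x = 0) ∨ ∃ h : B →+* V, h.comp f = g := by
  have : Ring.KrullDimLE 1 V := Ring.krullDimLE_iff.mpr hV
  refine or_iff_not_imp_left.mpr fun hg => ?_
  push Not at hg
  obtain ⟨t, ht, hgt⟩ := hg
  refine hM.exists_ringHom_comp_eq g ht hgt fun a b hab => ?_
  refine ValuationRing.dvd_of_forall_pow_dvd_mul_pow hgt fun n => ?_
  simpa only [map_mul, map_pow] using map_dvd g (hM.pow_dvd_mul_pow ht hab n)
end

section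
/- Let f : A → B and I ⊆ A form a Milnor square, i.e., A → B ×_{B/IB} A/I is an isomorphism. Let A → A' be a flat ring homomorphism. Then the base-changed square is again a Milnor square: the natural map A' → (B ⊗_A A') ×_{(B ⊗_A A')/I(B ⊗_A A')} A'/IA' is an isomorphism. -/
open scoped TensorProduct

/-! The Milnor condition says that `f` maps `I` bijectively onto the ideal `IB`, i.e. the
`A`-linear map `I → B` is injective with image `IB`. Tensoring with the flat module `A'` keeps
`I ⊗ A' → B ⊗ A'` injective, and its image is `IB ⊗ A' = I(B ⊗ A')`. This map factors as
`I ⊗ A' → A' → B ⊗ A'`, where the first map has image `IA'`; hence `A' → B ⊗ A'` maps `IA'`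
bijectively onto `I(B ⊗ A')`. -/

open TensorProduct LinearMap Algebra.TensorProduct

lemma isMilnorSquare_iff {A B : Type*} [CommRing A] [CommRing B] (f : A →+* B) (I : Ideal A) :
    IsMilnorSquare f I ↔ (∀ a ∈ I, f a = 0 → a = 0) ∧ ∀ b ∈ I.map f, ∃ a ∈ I, f a = b := by
  simp only [← Ideal.Quotient.eq_zero_iff_mem]
  constructor
  · rintro ⟨hinj, hlift⟩
    refine ⟨fun a ha hfa => hinj (by simp [hfa, ha]), fun b hb => ?_⟩
    obtain ⟨a, hab, ha⟩ := hlift b 0 (by rw [hb, map_zero])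
    exact ⟨a, ha, hab⟩
  · rintro ⟨hker, hlift⟩
    refine ⟨fun a₁ a₂ h => ?_, fun b c hbc => ?_⟩
    · obtain ⟨hf, hq⟩ := Prod.mk.inj h
      rw [← sub_eq_zero, ← map_sub] at hf hq
      exact sub_eq_zero.mp (hker _ hq hf)
    · obtain ⟨a₀, rfl⟩ := Ideal.Quotient.mk_surjective c
      obtain ⟨i, hi, hfi⟩ := hlift (b - f a₀) (by rw [map_sub, hbc, sub_eq_zero]; rfl)
      refine ⟨a₀ + i, by rw [map_add, hfi, add_sub_cancel], ?_⟩
      rw [map_add, hi, add_zero]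

section

variable {A B : Type*} [CommRing A] [CommRing B] [Algebra A B] {I : Ideal A}

lemma IsMilnorSquare.injective_linearMap_comp_subtype (h : IsMilnorSquare (algebraMap A B) I) :
    Function.Injective (Algebra.linearMap A B ∘ₗ I.subtype) :=
  (injective_iff_map_eq_zero _).mpr fun a ha =>
    Subtype.ext (((isMilnorSquare_iff _ I).mp h).1 a a.2 ha)

lemma IsMilnorSquare.range_linearMap_comp_subtype (h : IsMilnorSquare (algebraMap A B) I) :
    range (Algebra.linearMap A B ∘ₗ I.subtype) = (I.map (algebraMap A B)).restrictScalars A := by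
  refine le_antisymm ?_ fun b hb => ?_
  · rintro _ ⟨a, rfl⟩
    exact Ideal.mem_map_of_mem _ a.2
  · obtain ⟨a, ha, rfl⟩ := ((isMilnorSquare_iff _ I).mp h).2 b hb
    exact ⟨⟨a, ha⟩, rfl⟩

end

section

variable {A B A' : Type*} [CommRing A] [CommRing B] [CommRing A'] [Algebra A B] [Algebra A A']

lemma LinearMap.range_rTensor_eq_map_includeLeft {M : Type*} [AddCommGroup M] [Module A M]
    {g : M →ₗ[A] B} {K : Ideal B} (hg : range g = K.restrictScalars A) :
    range (g.rTensor A') = (K.map (includeLeft : B →ₐ[A] B ⊗[A] A')).restrictScalars A := by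
  rw [rTensor_range, hg, Ideal.map_includeLeft_eq]

lemma Ideal.map_includeLeft_map_algebraMap (I : Ideal A) :
    (I.map (algebraMap A B)).map (includeLeft : B →ₐ[A] B ⊗[A] A') =
      (I.map (algebraMap A A')).map (includeRight : A' →ₐ[A] B ⊗[A] A') := by
  rw [← Ideal.map_coe, ← Ideal.map_coe includeRight, Ideal.map_map, Ideal.map_map,
    AlgHom.comp_algebraMap, AlgHom.comp_algebraMap]

lemma includeRight_lid_rTensor_subtype (I : Ideal A) (z : I ⊗[A] A') :
    includeRight (R := A) (A := B) (TensorProduct.lid A A' (I.subtype.rTensor A' z)) =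
      (Algebra.linearMap A B ∘ₗ I.subtype).rTensor A' z := by
  induction z with
  | zero => simp
  | tmul i a' =>
    rw [rTensor_tmul, rTensor_tmul, TensorProduct.lid_tmul, includeRight_apply, ← smul_tmul,
      ← Algebra.algebraMap_eq_smul_one]
    rfl
  | add x y hx hy => simp only [map_add, hx, hy]

end

/-- Milnor squares are stable under flat base change: if `(A → B, I)` is a Milnor
square and `A → A'` is flat, then `(A' → B ⊗[A] A', IA')` is again a Milnor square. -/
theorem isMilnorSquare_baseChange_of_flat {A B A' : Type*}
    [CommRing A] [CommRing B] [CommRing A'] [Algebra A B] [Algebra A A']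
    [Module.Flat A A'] (I : Ideal A) (hM : IsMilnorSquare (algebraMap A B) I) :
    IsMilnorSquare
      (Algebra.TensorProduct.includeRight (R := A) (A := B) (B := A')).toRingHom
      (I.map (algebraMap A A')) := by
  have hmul_range := Ideal.subtype_rTensor_range A' I
  rw [Ideal.smul_top_eq_map] at hmul_range
  have hinj := Module.Flat.rTensor_preserves_injective_linearMap (M := A') _
    hM.injective_linearMap_comp_subtype
  have hrange := range_rTensor_eq_map_includeLeft (A' := A') hM.range_linearMap_comp_subtype
  rw [Ideal.map_includeLeft_map_algebraMap] at hrange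
  refine (isMilnorSquare_iff _ _).mpr ⟨fun x hx hx0 => ?_, fun y hy => ?_⟩
  · obtain ⟨z, rfl⟩ := hmul_range.ge hx
    have hz : z = 0 := hinj <| by
      rw [map_zero, ← includeRight_lid_rTensor_subtype]; exact hx0
    rw [hz, map_zero]
  · obtain ⟨z, rfl⟩ := hrange.ge hy
    exact ⟨_, hmul_range.le (mem_range_self _ z), includeRight_lid_rTensor_subtype I z⟩
end

section
/- Let f : A → B and I ⊆ A form a Milnor square, i.e., A → B ×_{B/IB} A/I is an isomorphism. Let A → A' be any ring homomorphism with A' a reduced ring. Then the base-changed square is again a Milnor square: the natural map A' → (B ⊗_A A') ×_{(B ⊗_A A')/I(B ⊗_A A')} A'/IA' is an isomorphism. -/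
open scoped TensorProduct

/-!
In a Milnor square `f` maps `I` bijectively onto `IB`, so for `i ∈ I` the map
`b ↦ f⁻¹(f(i) b)` is an `A`-linear form `φ : B → A` with `φ 1 = i`. Base-changing `φ` shows
that `1 ⊗ z = 0` in `B ⊗ A'` forces `IA' · z = 0`; for `z` in the kernel of
`A' → (B ⊗ A') × A'/IA'` this gives `z ^ 2 = 0`, so `z = 0` as `A'` is reduced.
Gluing is easier: `I(B ⊗ A')` is spanned by the `f(j) ⊗ a' = 1 ⊗ j a'` with `j ∈ I`,
so it is the image of `IA'`.
-/

theorem LinearMap.apply_smul_eq_zero_of_tmul_eq_zero {R M N : Type*} [CommRing R]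
    [AddCommGroup M] [Module R M] [AddCommGroup N] [Module R N] (φ : M →ₗ[R] R)
    {m : M} {n : N} (h : m ⊗ₜ[R] n = 0) : φ m • n = 0 := by
  simpa using congr(TensorProduct.lid R N (φ.rTensor N $h))

namespace IsMilnorSquare

section RingHom

variable {A B : Type*} [CommRing A] [CommRing B] {f : A →+* B} {I : Ideal A}

theorem exists_mem_eq_of_mem_map (hM : IsMilnorSquare f I) {b : B} (hb : b ∈ I.map f) :
    ∃ a ∈ I, f a = b := by
  obtain ⟨a, hab, ha⟩ := hM.2 b 0 (by rwa [map_zero, Ideal.Quotient.eq_zero_iff_mem])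
  exact ⟨a, Ideal.Quotient.eq_zero_iff_mem.mp ha, hab⟩

theorem eq_zero_of_mem_of_map_eq_zero (hM : IsMilnorSquare f I) {a : A} (ha : a ∈ I)
    (h : f a = 0) : a = 0 :=
  hM.1 <| Prod.ext (by simpa using h) (by simpa using Ideal.Quotient.eq_zero_iff_mem.mpr ha)

end RingHom

variable {A B A' : Type*} [CommRing A] [CommRing B] [CommRing A'] [Algebra A B] [Algebra A A']
  {I : Ideal A}

theorem exists_linearMap_apply_one (hM : IsMilnorSquare (algebraMap A B) I) {i : A}
    (hi : i ∈ I) : ∃ φ : B →ₗ[A] A, φ 1 = i := by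
  let ι : I →ₗ[A] B := (Algebra.linearMap A B).comp I.subtype
  have hι : Function.Injective ι := by
    refine (injective_iff_map_eq_zero ι).mpr fun a ha => Subtype.ext ?_
    exact hM.eq_zero_of_mem_of_map_eq_zero a.2 ha
  let e := LinearEquiv.ofInjective ι hι
  have hmul (b : B) : algebraMap A B i * b ∈ LinearMap.range ι := by
    obtain ⟨j, hj, hjb⟩ := hM.exists_mem_eq_of_mem_map
      (Ideal.mul_mem_right b _ (Ideal.mem_map_of_mem _ hi))
    exact ⟨⟨j, hj⟩, hjb⟩
  refine ⟨I.subtype ∘ₗ e.symm.toLinearMap ∘ₗ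
    (LinearMap.mulLeft A (algebraMap A B i)).codRestrict _ hmul, ?_⟩
  have : e.symm ⟨algebraMap A B i * 1, hmul 1⟩ = ⟨i, hi⟩ :=
    e.symm_apply_eq.mpr (Subtype.ext (by simp [e, ι]))
  exact congrArg Subtype.val this

theorem map_le_annihilator_of_one_tmul_eq_zero (hM : IsMilnorSquare (algebraMap A B) I)
    {z : A'} (hz : (1 : B) ⊗ₜ[A] z = 0) :
    I.map (algebraMap A A') ≤ (A' ∙ z).annihilator := by
  refine Ideal.map_le_iff_le_comap.mpr fun i hi => ?_
  obtain ⟨φ, hφ⟩ := hM.exists_linearMap_apply_one hi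
  rw [Ideal.mem_comap, Submodule.mem_annihilator_span_singleton, algebraMap_smul, ← hφ]
  exact φ.apply_smul_eq_zero_of_tmul_eq_zero hz

theorem exists_one_tmul_eq_of_mem_map (hM : IsMilnorSquare (algebraMap A B) I)
    {t : B ⊗[A] A'} (ht : t ∈ (I.map (algebraMap A A')).map
      (Algebra.TensorProduct.includeRight (R := A) (A := B) (B := A')).toRingHom) :
    ∃ x ∈ I.map (algebraMap A A'), (1 : B) ⊗ₜ[A] x = t := by
  rw [Ideal.map_map, AlgHom.toRingHom_eq_coe, AlgHom.comp_algebraMap,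
    ← AlgHom.comp_algebraMap Algebra.TensorProduct.includeLeft, ← Ideal.map_map] at ht
  obtain ⟨u, rfl⟩ := (Ideal.map_includeLeft_eq (I.map (algebraMap A B))).le ht
  clear ht
  induction u using TensorProduct.induction_on with
  | zero => exact ⟨0, zero_mem _, by simp⟩
  | tmul β a' =>
    obtain ⟨j, hj, hβ⟩ := hM.exists_mem_eq_of_mem_map β.2
    refine ⟨algebraMap A A' j * a', Ideal.mul_mem_right _ _ (Ideal.mem_map_of_mem _ hj), ?_⟩
    simp [← hβ, Algebra.algebraMap_eq_smul_one, TensorProduct.smul_tmul]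
  | add u v hu hv =>
    obtain ⟨x, hx, hxu⟩ := hu
    obtain ⟨y, hy, hyv⟩ := hv
    exact ⟨x + y, add_mem hx hy, by rw [TensorProduct.tmul_add, hxu, hyv, map_add]⟩

end IsMilnorSquare

/-- Milnor squares are stable under base change along any map to a reduced ring: if
`(A → B, I)` is a Milnor square and `A → A'` is a ring homomorphism with `A'` reduced,
then `(A' → B ⊗[A] A', IA')` is again a Milnor square. -/
theorem isMilnorSquare_baseChange_of_reduced {A B A' : Type*}
    [CommRing A] [CommRing B] [CommRing A'] [Algebra A B] [Algebra A A']
    [IsReduced A'] (I : Ideal A) (hM : IsMilnorSquare (algebraMap A B) I) :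
    IsMilnorSquare
      (Algebra.TensorProduct.includeRight (R := A) (A := B) (B := A')).toRingHom
      (I.map (algebraMap A A')) := by
  constructor
  · intro x y hxy
    obtain ⟨htmul, hquot⟩ := Prod.mk.inj hxy
    have hz : (1 : B) ⊗ₜ[A] (x - y) = 0 := by
      rw [TensorProduct.tmul_sub, sub_eq_zero]
      exact htmul
    have hsq : (x - y) * (x - y) = 0 :=
      (Submodule.mem_annihilator_span_singleton _ _).mp
        (hM.map_le_annihilator_of_one_tmul_eq_zero hz (Ideal.Quotient.eq.mp hquot))
    exact sub_eq_zero.mp (IsReduced.eq_zero _ ⟨2, by rwa [sq]⟩)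
  · intro b c hbc
    obtain ⟨c, rfl⟩ := Ideal.Quotient.mk_surjective c
    obtain ⟨x, hx, hxb⟩ := hM.exists_one_tmul_eq_of_mem_map (Ideal.Quotient.eq.mp hbc)
    refine ⟨c + x, ?_, ?_⟩
    · simp [TensorProduct.tmul_add, hxb]
    · rw [map_add, Ideal.Quotient.eq_zero_iff_mem.mpr hx, add_zero]
end

section
/- Let f : A → B and I ⊆ A form a Milnor square, i.e., A → B ×_{B/IB} A/I is an isomorphism. Then for every A-subalgebra B' ⊆ B (in particular for every finitely generated A-subalgebra), the pair (A → B', I) is again a Milnor square: the natural map A → B' ×_{B'/IB'} A/I is an isomorphism. Consequently, every Milnor square (A → B, I) is the filtered colimit of the Milnor squares (A → B_α, I) where B_α ranges over the finitely generated A-subalgebras of B. -/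
open scoped TensorProduct

theorem quotientMapOfMilnor_mk {A B : Type*} [CommRing A] [CommRing B] (f : A →+* B)
    (I : Ideal A) (a : A) :
    quotientMapOfMilnor f I (Ideal.Quotient.mk I a) = Ideal.Quotient.mk (I.map f) (f a) :=
  rfl

theorem IsMilnorSquare.of_comp_injective {A B C : Type*} [CommRing A] [CommRing B]
    [CommRing C] {f : A →+* C} {g : C →+* B} {I : Ideal A} (hg : Function.Injective g)
    (hM : IsMilnorSquare (g.comp f) I) : IsMilnorSquare f I := by
  refine ⟨fun a a' h => hM.1 ?_, fun b c h => ?_⟩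
  · simp only [Prod.mk.injEq] at h ⊢
    exact ⟨congrArg g h.1, h.2⟩
  obtain ⟨a₀, rfl⟩ := Ideal.Quotient.mk_surjective c
  have hb : b - f a₀ ∈ I.map f := by
    rwa [quotientMapOfMilnor_mk, Ideal.Quotient.eq] at h
  have hgb : g b - g (f a₀) ∈ I.map (g.comp f) := by
    rw [← Ideal.map_map, ← map_sub]
    exact Ideal.mem_map_of_mem g hb
  obtain ⟨a, hab, hac⟩ := hM.2 (g b) (Ideal.Quotient.mk I a₀) (by
    rw [quotientMapOfMilnor_mk, Ideal.Quotient.eq]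
    exact hgb)
  exact ⟨a, hg hab, hac⟩

theorem IsMilnorSquare.subalgebra {A B : Type*} [CommRing A] [CommRing B] [Algebra A B]
    {I : Ideal A} (hM : IsMilnorSquare (algebraMap A B) I) (B' : Subalgebra A B) :
    IsMilnorSquare (algebraMap A B') I :=
  .of_comp_injective (g := (B'.val : B' →+* B)) Subtype.val_injective
    (by rwa [AlgHom.comp_algebraMap])

theorem Subalgebra.directedOn_fg (A B : Type*) [CommRing A] [CommRing B] [Algebra A B] :
    DirectedOn (· ≤ ·) {B' : Subalgebra A B | B'.FG} :=
  fun _ h₁ _ h₂ => ⟨_, Subalgebra.FG.sup h₁ h₂, le_sup_left, le_sup_right⟩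

theorem Subalgebra.fg_adjoin_singleton (A : Type*) {B : Type*} [CommRing A] [CommRing B]
    [Algebra A B] (b : B) : (Algebra.adjoin A {b}).FG := by
  simpa using Subalgebra.fg_adjoin_finset (R := A) {b}

/-- If `(A → B, I)` is a Milnor square, then for every `A`-subalgebra `B' ⊆ B` the
pair `(A → B', I)` is again a Milnor square. Moreover, the finitely generated
`A`-subalgebras of `B` form a directed family whose union is `B`, so every Milnor
square `(A → B, I)` is the filtered colimit of the Milnor squares `(A → B_α, I)` over
the finitely generated `A`-subalgebras `B_α ⊆ B`. -/
theorem isMilnorSquare_subalgebra {A B : Type*} [CommRing A] [CommRing B]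
    [Algebra A B] (I : Ideal A) (hM : IsMilnorSquare (algebraMap A B) I) :
    (∀ B' : Subalgebra A B, IsMilnorSquare (algebraMap A B') I) ∧
    DirectedOn (· ≤ ·) {B' : Subalgebra A B | B'.FG} ∧
    ∀ b : B, ∃ B' : Subalgebra A B, B'.FG ∧ b ∈ B' :=
  ⟨hM.subalgebra, Subalgebra.directedOn_fg A B, fun b =>
    ⟨_, Subalgebra.fg_adjoin_singleton A b, Algebra.self_mem_adjoin_singleton A b⟩⟩
end

section
/- Let X be a quasi-compact quasi-separated scheme. Then the subspace X^gen ⊆ X of generic points of X, with the induced topology, is Hausdorff and its topology has a basis of clopen (simultaneously closed and open) subsets. -/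
/-!
A minimal prime `p` of a ring `R` lies in the closure of `D(g)` only if `g ∉ p`: otherwise `g`
is nilpotent in the zero-dimensional ring `R_p`, so `s * g` is nilpotent for some `s ∉ p`, and
`D(s)` is a neighbourhood of `p` disjoint from `D(g)`. As quasi-compact opens of `Spec R` are
finite unions of basic opens, a minimal prime in the closure of a quasi-compact open lies in it.

On a quasi-separated scheme `X` quasi-compact opens pull back to quasi-compact opens of any
affine chart, in which generic points of `X` are minimal primes. Hence an affine open `W` and its
closure have the same trace on `X^gen`, so the traces of affine opens form a clopen basis of
`X^gen`. A T₀ space with a clopen basis is totally separated, in particular Hausdorff.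
-/

open AlgebraicGeometry Topology TopologicalSpace

theorem TopologicalSpace.IsTopologicalBasis.isTopologicalBasis_isClopen_subtype
    {X : Type*} [TopologicalSpace X] {B : Set (Set X)} (hB : IsTopologicalBasis B) {G : Set X}
    (hBG : ∀ U ∈ B, closure U ∩ G ⊆ U) : IsTopologicalBasis {s : Set G | IsClopen s} := by
  refine (hB.isInducing IsInducing.subtypeVal).of_isOpen_of_subset (fun s hs ↦ hs.isOpen) ?_
  rintro _ ⟨U, hU, rfl⟩
  have hclosure : ((↑) : G → X) ⁻¹' closure U = (↑) ⁻¹' U :=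
    subset_antisymm (fun x hx ↦ hBG U hU ⟨hx, x.2⟩) (Set.preimage_mono subset_closure)
  exact ⟨hclosure ▸ isClosed_closure.preimage continuous_subtype_val,
    (hB.isOpen hU).preimage continuous_subtype_val⟩

namespace PrimeSpectrum

variable {R : Type*} [CommRing R]

theorem exists_notMem_isNilpotent_mul_of_mem_minimalPrimes {p : Ideal R}
    (hp : p ∈ minimalPrimes R) {g : R} (hg : g ∈ p) : ∃ s ∉ p, IsNilpotent (s * g) := by
  have : p.IsPrime := hp.1.1
  have : Ring.KrullDimLE 0 (Localization.AtPrime p) :=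
    Ring.KrullDimLE.of_isLocalization p hp (Localization.AtPrime p)
  have hnil : IsNilpotent (algebraMap R (Localization.AtPrime p) g) := by
    rw [Ring.KrullDimLE.isNilpotent_iff_mem_maximalIdeal]
    exact (IsLocalization.AtPrime.to_map_mem_maximal_iff _ p g).mpr hg
  obtain ⟨n, hn⟩ := hnil
  rw [← map_pow] at hn
  obtain ⟨⟨s, hs⟩, hsg⟩ := (IsLocalization.map_eq_zero_iff p.primeCompl _ _).mp hn
  refine ⟨s, hs, n + 1, ?_⟩
  calc (s * g) ^ (n + 1) = s ^ n * g * (s * g ^ n) := by ring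
    _ = 0 := by rw [hsg, mul_zero]

theorem mem_basicOpen_of_mem_closure {p : PrimeSpectrum R} (hp : p.asIdeal ∈ minimalPrimes R)
    {g : R} (hcl : p ∈ closure (basicOpen g : Set (PrimeSpectrum R))) : p ∈ basicOpen g := by
  by_contra hg
  obtain ⟨s, hs, hsg⟩ := exists_notMem_isNilpotent_mul_of_mem_minimalPrimes hp (not_not.mp hg)
  obtain ⟨q, hqs, hqg⟩ := mem_closure_iff.mp hcl _ (basicOpen s).isOpen hs
  have hq : q ∈ basicOpen (s * g) := by rw [basicOpen_mul]; exact ⟨hqs, hqg⟩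
  rw [(basicOpen_eq_bot_iff _).mpr hsg] at hq
  exact hq

theorem mem_of_mem_closure_of_isCompact_of_isOpen {p : PrimeSpectrum R}
    (hp : p.asIdeal ∈ minimalPrimes R) {U : Set (PrimeSpectrum R)} (hUc : IsCompact U)
    (hUo : IsOpen U) (hcl : p ∈ closure U) : p ∈ U := by
  obtain ⟨t, ht, rfl⟩ := eq_finite_iUnion_of_isTopologicalBasis_of_isCompact_open _
    isTopologicalBasis_basic_opens U hUc hUo
  rw [ht.closure_biUnion] at hcl
  simp only [Set.mem_iUnion] at hcl ⊢
  obtain ⟨g, hg, hpg⟩ := hcl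
  exact ⟨g, hg, mem_basicOpen_of_mem_closure hp hpg⟩

end PrimeSpectrum

theorem AlgebraicGeometry.Scheme.mem_of_mem_closure_of_isCompact_of_isOpen {X : Scheme}
    [QuasiSeparatedSpace X] {V : Set X} (hVc : IsCompact V) (hVo : IsOpen V) {y : X}
    (hy : ∀ z : X, z ⤳ y → z = y) (hcl : y ∈ closure V) : y ∈ V := by
  obtain ⟨W, hW, hyW, -⟩ := exists_isAffineOpen_mem_and_subset (U := ⊤) (Set.mem_univ y)
  set f := hW.fromSpec
  have hf : IsOpenEmbedding f := have := hW.isOpenImmersion_fromSpec; f.isOpenEmbedding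
  obtain ⟨p, rfl⟩ : y ∈ Set.range f := hW.range_fromSpec ▸ hyW
  have hp : p.asIdeal ∈ minimalPrimes Γ(X, W) := PrimeSpectrum.isMin_iff.mp fun q hq ↦
    le_of_eq (hf.injective (hy _ ((PrimeSpectrum.le_iff_specializes q p).mp hq |>.map
      f.continuous))).symm
  exact PrimeSpectrum.mem_of_mem_closure_of_isCompact_of_isOpen hp
    (QuasiCompact.isCompact_preimage (f := f) V hVo hVc) (hVo.preimage f.continuous)
    (hf.isOpenMap.preimage_closure_subset_closure_preimage hcl)

theorem genericPoints_t2_and_clopen_basis_general (X : Scheme) [QuasiSeparatedSpace X] :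
    T2Space {x : X | ∀ y : X, y ⤳ x → y = x} ∧
    TopologicalSpace.IsTopologicalBasis
      {s : Set {x : X | ∀ y : X, y ⤳ x → y = x} | IsClopen s} := by
  have hbasis : IsTopologicalBasis {s : Set {x : X | ∀ y : X, y ⤳ x → y = x} | IsClopen s} :=
    X.isBasis_affineOpens.isTopologicalBasis_isClopen_subtype fun _ ⟨W, hW, hWU⟩ _ ⟨hcl, hy⟩ ↦
      hWU ▸ Scheme.mem_of_mem_closure_of_isCompact_of_isOpen hW.isCompact W.isOpen hy (hWU ▸ hcl)
  exact ⟨(totallySeparatedSpace_of_t0_of_basis_clopen hbasis).t2Space, hbasis⟩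

/-- Let `X` be a quasi-compact quasi-separated scheme. Then the subspace `X^gen ⊆ X`
of generic points of `X` (points admitting no nontrivial generalization) is Hausdorff
and its topology has a basis of clopen sets. -/
theorem genericPoints_t2_and_clopen_basis (X : Scheme) [CompactSpace X]
    [QuasiSeparatedSpace X] :
    T2Space {x : X | ∀ y : X, y ⤳ x → y = x} ∧
    TopologicalSpace.IsTopologicalBasis
      {s : Set {x : X | ∀ y : X, y ⤳ x → y = x} | IsClopen s} :=
  genericPoints_t2_and_clopen_basis_general X
end
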